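/- arXiv:1712.08450 — 5 statements merged into one kernel-verified Lean document; each statement's English description precedes it below -/
import Mathlib

section
/- Let U be a bounded domain in R^n with finite positive measure, 1 < p < ∞, and let ρ : (0,∞) → (0,∞) be a nondecreasing function. Then for every integrable function u on U with mean value u_U = (1/|U|)∫_U u, one has ∫_U |u(x)-u_U|^p dx ≤ (diam(U)^n · ρ(diam(U))^p / |U|) · ∫_U∫_U |u(x)-u(y)|^p / (|x-y|^n · ρ(|x-y|)^p) dy dx. -/
open MeasureTheory Metric Set ENNReal

/-! Jensen's inequality (Hölder against the constant `1` on the normalized measure) bounds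
`|u x - u_U| ^ p` by the average over `y ∈ U` of `|u x - u y| ^ p`. For `x, y ∈ U` we have
`‖x - y‖ ≤ diam U`, and `r ↦ r ^ n * ρ r ^ p` is nondecreasing, so dividing by the kernel
`‖x - y‖ ^ n * ρ ‖x - y‖ ^ p` costs at most the factor `diam U ^ n * ρ (diam U) ^ p`. -/

section Jensen

variable {α : Type*} [MeasurableSpace α]

theorem rpow_lintegral_le_lintegral_rpow {ν : Measure α} [IsProbabilityMeasure ν] {p : ℝ}
    (hp : 1 ≤ p) {f : α → ℝ≥0∞} (hf : AEMeasurable f ν) :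
    (∫⁻ x, f x ∂ν) ^ p ≤ ∫⁻ x, f x ^ p ∂ν := by
  have h := eLpNorm'_le_eLpNorm'_mul_rpow_measure_univ one_pos hp hf.aestronglyMeasurable
  simp only [eLpNorm'_eq_lintegral_enorm, enorm_eq_self, rpow_one, div_one, measure_univ,
    one_rpow, mul_one] at h
  calc (∫⁻ x, f x ∂ν) ^ p ≤ ((∫⁻ x, f x ^ p ∂ν) ^ (1 / p)) ^ p := by gcongr
    _ = ∫⁻ x, f x ^ p ∂ν := by
      rw [← rpow_mul, one_div_mul_cancel (by linarith), rpow_one]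

theorem ofReal_abs_sub_integral_rpow_le {ν : Measure α} [IsProbabilityMeasure ν] {p : ℝ}
    (hp : 1 ≤ p) {u : α → ℝ} (hu : Integrable u ν) (c : ℝ) :
    ENNReal.ofReal (|c - ∫ y, u y ∂ν| ^ p) ≤ ∫⁻ y, ENNReal.ofReal (|c - u y| ^ p) ∂ν := by
  have hcu : Integrable (fun y => c - u y) ν := (integrable_const c).sub hu
  have hmean : c - ∫ y, u y ∂ν = ∫ y, (c - u y) ∂ν := by
    rw [integral_sub (integrable_const c) hu, integral_const, probReal_univ, one_smul]
  have habs : ENNReal.ofReal |c - ∫ y, u y ∂ν| ≤ ∫⁻ y, ENNReal.ofReal |c - u y| ∂ν := by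
    rw [hmean, ← ofReal_integral_eq_lintegral_ofReal hcu.abs (ae_of_all _ fun _ => abs_nonneg _)]
    exact ENNReal.ofReal_le_ofReal abs_integral_le_integral_abs
  have hp0 : 0 ≤ p := by linarith
  calc ENNReal.ofReal (|c - ∫ y, u y ∂ν| ^ p)
      = ENNReal.ofReal |c - ∫ y, u y ∂ν| ^ p := (ofReal_rpow_of_nonneg (abs_nonneg _) hp0).symm
    _ ≤ (∫⁻ y, ENNReal.ofReal |c - u y| ∂ν) ^ p := by gcongr
    _ ≤ ∫⁻ y, ENNReal.ofReal |c - u y| ^ p ∂ν :=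
      rpow_lintegral_le_lintegral_rpow hp hcu.aemeasurable.abs.ennreal_ofReal
    _ = ∫⁻ y, ENNReal.ofReal (|c - u y| ^ p) ∂ν := by
      simp_rw [ofReal_rpow_of_nonneg (abs_nonneg _) hp0]

theorem ofReal_abs_sub_average_rpow_le_laverage {μ : Measure α} [IsFiniteMeasure μ] [NeZero μ]
    {p : ℝ} (hp : 1 ≤ p) {u : α → ℝ} (hu : Integrable u μ) (c : ℝ) :
    ENNReal.ofReal (|c - ⨍ y, u y ∂μ| ^ p) ≤ ⨍⁻ y, ENNReal.ofReal (|c - u y| ^ p) ∂μ := by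
  rw [average_eq', laverage_eq']
  exact ofReal_abs_sub_integral_rpow_le hp (hu.smul_measure (by simpa using NeZero.ne μ)) c

theorem setLIntegral_rpow_abs_sub_setAverage_le {μ : Measure α} {s : Set α} (hs0 : μ s ≠ 0)
    (hs : μ s ≠ ∞) {p : ℝ} (hp : 1 ≤ p) {u : α → ℝ} (hu : IntegrableOn u s μ) :
    ∫⁻ x in s, ENNReal.ofReal (|u x - ⨍ y in s, u y ∂μ| ^ p) ∂μ ≤
      (μ s)⁻¹ * ∫⁻ x in s, ∫⁻ y in s, ENNReal.ofReal (|u x - u y| ^ p) ∂μ ∂μ := by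
  have : IsFiniteMeasure (μ.restrict s) := isFiniteMeasure_restrict.2 hs
  have : NeZero (μ.restrict s) := ⟨by simpa using hs0⟩
  calc ∫⁻ x in s, ENNReal.ofReal (|u x - ⨍ y in s, u y ∂μ| ^ p) ∂μ
      ≤ ∫⁻ x in s, (μ s)⁻¹ * ∫⁻ y in s, ENNReal.ofReal (|u x - u y| ^ p) ∂μ ∂μ := by
        refine lintegral_mono fun x => ?_
        rw [← ENNReal.div_eq_inv_mul, ← setLAverage_eq]
        exact ofReal_abs_sub_average_rpow_le_laverage hp hu (u x)
    _ = (μ s)⁻¹ * ∫⁻ x in s, ∫⁻ y in s, ENNReal.ofReal (|u x - u y| ^ p) ∂μ ∂μ :=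
        lintegral_const_mul' _ _ (inv_ne_top.2 hs0)

end Jensen

section RadialKernel

variable {ρ : ℝ → ℝ} {N p : ℝ}

theorem rpow_mul_rpow_le_of_monotoneOn (hN : 0 ≤ N) (hp : 0 ≤ p)
    (hρpos : ∀ r > (0 : ℝ), 0 < ρ r) (hρmono : MonotoneOn ρ (Ioi 0)) {r d : ℝ} (hr : 0 < r)
    (hrd : r ≤ d) : r ^ N * ρ r ^ p ≤ d ^ N * ρ d ^ p := by
  have hρr := hρpos r hr
  gcongr
  · exact Real.rpow_nonneg (hr.trans_le hrd).le _
  · exact hρmono hr (hr.trans_le hrd) hrd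

variable {E : Type*} [NormedAddCommGroup E]

theorem ofReal_abs_sub_rpow_le_diam_mul_kernel (hN : 0 ≤ N) (hp : 0 < p)
    (hρpos : ∀ r > (0 : ℝ), 0 < ρ r) (hρmono : MonotoneOn ρ (Ioi 0)) {s : Set E}
    (hs : Bornology.IsBounded s) (u : E → ℝ) {x y : E} (hx : x ∈ s) (hy : y ∈ s) :
    ENNReal.ofReal (|u x - u y| ^ p) ≤
      ENNReal.ofReal (diam s ^ N * ρ (diam s) ^ p) *
        ENNReal.ofReal (|u x - u y| ^ p / (‖x - y‖ ^ N * ρ ‖x - y‖ ^ p)) := by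
  rcases eq_or_ne x y with rfl | hxy
  · simp [Real.zero_rpow hp.ne']
  have hr : 0 < ‖x - y‖ := norm_pos_iff.2 (sub_ne_zero.2 hxy)
  have hK : 0 < ‖x - y‖ ^ N * ρ ‖x - y‖ ^ p := by
    have := hρpos _ hr
    positivity
  have hKle := rpow_mul_rpow_le_of_monotoneOn hN hp.le hρpos hρmono hr
    (by simpa [dist_eq_norm] using dist_le_diam_of_mem hs hx hy)
  rw [← ENNReal.ofReal_mul (hK.trans_le hKle).le]
  refine ENNReal.ofReal_le_ofReal ?_
  calc |u x - u y| ^ p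
      = (‖x - y‖ ^ N * ρ ‖x - y‖ ^ p) * (|u x - u y| ^ p / (‖x - y‖ ^ N * ρ ‖x - y‖ ^ p)) :=
        (mul_div_cancel₀ _ hK.ne').symm
    _ ≤ _ := by gcongr

variable [MeasurableSpace E] {μ : Measure E}

theorem setLIntegral_setLIntegral_le_diam_mul_kernel (hN : 0 ≤ N) (hp : 0 < p)
    (hρpos : ∀ r > (0 : ℝ), 0 < ρ r) (hρmono : MonotoneOn ρ (Ioi 0)) {s : Set E}
    (hs : MeasurableSet s) (hsb : Bornology.IsBounded s) (u : E → ℝ) :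
    ∫⁻ x in s, ∫⁻ y in s, ENNReal.ofReal (|u x - u y| ^ p) ∂μ ∂μ ≤
      ENNReal.ofReal (diam s ^ N * ρ (diam s) ^ p) * ∫⁻ x in s, ∫⁻ y in s,
        ENNReal.ofReal (|u x - u y| ^ p / (‖x - y‖ ^ N * ρ ‖x - y‖ ^ p)) ∂μ ∂μ := by
  calc _ ≤ ∫⁻ x in s, ∫⁻ y in s, ENNReal.ofReal (diam s ^ N * ρ (diam s) ^ p) *
          ENNReal.ofReal (|u x - u y| ^ p / (‖x - y‖ ^ N * ρ ‖x - y‖ ^ p)) ∂μ ∂μ :=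
        setLIntegral_mono' hs fun x hx => setLIntegral_mono' hs fun y hy =>
          ofReal_abs_sub_rpow_le_diam_mul_kernel hN hp hρpos hρmono hsb u hx hy
    _ = _ := by simp_rw [lintegral_const_mul' _ _ ofReal_ne_top]

end RadialKernel

theorem fractional_poincare_radial_kernel_general
    (n : ℕ) (U : Set (EuclideanSpace ℝ (Fin n)))
    (hUopen : IsOpen U) (hUbdd : Bornology.IsBounded U)
    (hUpos : 0 < volume U) (p : ℝ) (hp : 1 < p)
    (ρ : ℝ → ℝ) (hρpos : ∀ r > (0 : ℝ), 0 < ρ r) (hρmono : MonotoneOn ρ (Set.Ioi 0))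
    (u : EuclideanSpace ℝ (Fin n) → ℝ)
    (huint : IntegrableOn u U volume) :
    ∫⁻ x in U, ENNReal.ofReal
        (|u x - (∫ y in U, u y) / (volume U).toReal| ^ p) ≤
      (ENNReal.ofReal (Metric.diam U ^ (n : ℝ) * ρ (Metric.diam U) ^ p) / volume U) *
        ∫⁻ x in U, ∫⁻ y in U,
          ENNReal.ofReal (|u x - u y| ^ p / (‖x - y‖ ^ (n : ℝ) * ρ ‖x - y‖ ^ p)) := by
  have hmean : (∫ y in U, u y) / (volume U).toReal = ⨍ y in U, u y := by
    rw [setAverage_eq, smul_eq_mul, measureReal_def, inv_mul_eq_div]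
  rw [hmean, ENNReal.div_eq_inv_mul, mul_assoc]
  calc _ ≤ (volume U)⁻¹ * ∫⁻ x in U, ∫⁻ y in U, ENNReal.ofReal (|u x - u y| ^ p) :=
        setLIntegral_rpow_abs_sub_setAverage_le hUpos.ne' hUbdd.measure_lt_top.ne hp.le huint
    _ ≤ _ := by
        gcongr
        exact setLIntegral_setLIntegral_le_diam_mul_kernel n.cast_nonneg (by linarith) hρpos
          hρmono hUopen.measurableSet hUbdd u

/-- Proposition 5.5 of the paper: a fractional Poincaré-type inequality with a
general nondecreasing radial kernel, on an arbitrary bounded domain. -/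
theorem fractional_poincare_radial_kernel
    (n : ℕ) (hn : 1 ≤ n) (U : Set (EuclideanSpace ℝ (Fin n)))
    (hUopen : IsOpen U) (hUconn : IsConnected U) (hUbdd : Bornology.IsBounded U)
    (hUpos : 0 < volume U) (p : ℝ) (hp : 1 < p)
    (ρ : ℝ → ℝ) (hρpos : ∀ r > (0 : ℝ), 0 < ρ r) (hρmono : MonotoneOn ρ (Set.Ioi 0))
    (u : EuclideanSpace ℝ (Fin n) → ℝ) (hu : Measurable u)
    (huint : IntegrableOn u U volume) :
    ∫⁻ x in U, ENNReal.ofReal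
        (|u x - (∫ y in U, u y) / (volume U).toReal| ^ p) ≤
      (ENNReal.ofReal (Metric.diam U ^ (n : ℝ) * ρ (Metric.diam U) ^ p) / volume U) *
        ∫⁻ x in U, ∫⁻ y in U,
          ENNReal.ofReal (|u x - u y| ^ p / (‖x - y‖ ^ (n : ℝ) * ρ ‖x - y‖ ^ p)) :=
  fractional_poincare_radial_kernel_general n U hUopen hUbdd hUpos p hp ρ hρpos hρmono u huint
end

section
/- Let Ω be a bounded domain in R^n, Γ a countable index set, {B_t}_{t∈Γ} a family of pairwise disjoint measurable subsets of Ω, and {W_t}_{t∈Γ} measurable subsets of Ω with B_t ⊆ W_t and |W_t| > 0 for each t. Suppose the overlap bound Σ_{t∈Γ} χ_{W_t}(x) ≤ N holds for a.e. x ∈ Ω. Define Tg(x) := Σ_{t∈Γ} χ_{B_t}(x) (1/|W_t|) ∫_{W_t} |g|. Then for every 1 < q < ∞, T is a bounded operator from L^q(Ω) to L^q(Ω) with operator norm at most 2 (qN/(q-1))^{1/q}. -/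
open MeasureTheory Metric Set ENNReal

/-- The Hardy-type averaging operator associated with the families `B` and `W`:
`Tg(x) = Σ_t χ_{B_t}(x) (1/|W_t|) ∫_{W_t} |g|`. -/
noncomputable def hardyOp {n : ℕ} (B W : ℕ → Set (EuclideanSpace ℝ (Fin n)))
    (g : EuclideanSpace ℝ (Fin n) → ℝ) (x : EuclideanSpace ℝ (Fin n)) : ℝ≥0∞ :=
  ∑' t, (B t).indicator
    (fun _ => (∫⁻ y in W t, ENNReal.ofReal |g y|) / volume (W t)) x

/-- Lemma 2.6 of the paper: the Hardy-type operator `T` is bounded on `L^q(Ω)` with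
operator norm at most `2 (qN/(q-1))^{1/q}`. -/
theorem hardyOp_Lq_bound
    (n : ℕ) (hn : 1 ≤ n) (Ω : Set (EuclideanSpace ℝ (Fin n)))
    (hΩopen : IsOpen Ω) (hΩbdd : Bornology.IsBounded Ω)
    (B W : ℕ → Set (EuclideanSpace ℝ (Fin n)))
    (hBmeas : ∀ t, MeasurableSet (B t)) (hWmeas : ∀ t, MeasurableSet (W t))
    (hBW : ∀ t, B t ⊆ W t) (hWΩ : ∀ t, W t ⊆ Ω) (hWpos : ∀ t, 0 < volume (W t))
    (hdisj : Pairwise (Function.onFun Disjoint B))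
    (N : ℕ) (hN : 1 ≤ N)
    (hoverlap : ∀ᵐ x ∂(volume.restrict Ω),
      ∑' t, (W t).indicator (fun _ => (1 : ℝ≥0∞)) x ≤ N)
    (q : ℝ) (hq : 1 < q)
    (g : EuclideanSpace ℝ (Fin n) → ℝ) (hg : Measurable g) :
    (∫⁻ x in Ω, hardyOp B W g x ^ q) ^ (1 / q) ≤
      ENNReal.ofReal (2 * (q * N / (q - 1)) ^ (1 / q)) *
        (∫⁻ x in Ω, ENNReal.ofReal (|g x| ^ q)) ^ (1 / q) := by
  have hq0 : (0:ℝ) < q := one_pos.trans hq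
  have hq0' : (0:ℝ) ≤ 1/q := by positivity
  set F : EuclideanSpace ℝ (Fin n) → ℝ≥0∞ := fun x => ENNReal.ofReal (|g x| ^ q) with hF
  have hFmeas : Measurable F :=
    ENNReal.measurable_ofReal.comp (hg.abs.pow_const q)
  set c : ℕ → ℝ≥0∞ :=
    fun t => (∫⁻ y in W t, ENNReal.ofReal |g y|) / volume (W t) with hc
  -- pointwise identity using disjointness
  have hpt : ∀ x, hardyOp B W g x ^ q
      = ∑' t, (B t).indicator (fun _ => c t ^ q) x := by
    intro x
    by_cases hx : ∃ t, x ∈ B t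
    · obtain ⟨t, ht⟩ := hx
      have h1 : ∀ s, s ≠ t → (B s).indicator (fun _ => c s) x = 0 := by
        intro s hs
        have hxs : x ∉ B s := fun hxs => Set.disjoint_left.mp (hdisj hs) hxs ht
        simp [Set.indicator_of_notMem hxs]
      have h2 : ∀ s, s ≠ t → (B s).indicator (fun _ => c s ^ q) x = 0 := by
        intro s hs
        have hxs : x ∉ B s := fun hxs => Set.disjoint_left.mp (hdisj hs) hxs ht
        simp [Set.indicator_of_notMem hxs]
      rw [hardyOp, tsum_eq_single t h1, tsum_eq_single t h2,
        Set.indicator_of_mem ht, Set.indicator_of_mem ht]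
    · push_neg at hx
      rw [hardyOp]
      simp only [Set.indicator_of_notMem (hx _), tsum_zero]
      exact ENNReal.zero_rpow_of_pos hq0
  -- finiteness of |W t|
  have hWfin : ∀ t, volume (W t) ≠ ⊤ := fun t =>
    ((measure_mono (hWΩ t)).trans_lt hΩbdd.measure_lt_top).ne
  -- Jensen / Hölder on each W t
  have jensen : ∀ t, c t ^ q * volume (W t) ≤ ∫⁻ y in W t, F y := by
    intro t
    set a := volume (W t) with ha
    set I := ∫⁻ y in W t, ENNReal.ofReal |g y| with hI
    set J := ∫⁻ y in W t, F y with hJ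
    have ha0 : a ≠ 0 := (hWpos t).ne'
    have haT : a ≠ ⊤ := hWfin t
    -- Hölder inequality
    have hpq : q.HolderConjugate (q / (q - 1)) := Real.HolderConjugate.conjExponent hq
    have holder : I ≤ J ^ (1/q) * a ^ (1 - 1/q) := by
      have h := ENNReal.lintegral_mul_le_Lp_mul_Lq (volume.restrict (W t)) hpq
        (f := fun y => ENNReal.ofReal |g y|) (g := fun _ => (1 : ℝ≥0∞))
        (ENNReal.measurable_ofReal.comp hg.abs).aemeasurable aemeasurable_const
      simp only [Pi.mul_apply, mul_one, ENNReal.one_rpow, lintegral_const,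
        Measure.restrict_apply MeasurableSet.univ, Set.univ_inter] at h
      have hfq : ∀ y, (ENNReal.ofReal |g y|) ^ q = F y := fun y =>
        ENNReal.ofReal_rpow_of_nonneg (abs_nonneg _) hq0.le
      simp only [hfq] at h
      have hexp : 1 / (q / (q - 1)) = 1 - 1/q := by
        field_simp
      rw [hexp, one_mul] at h
      exact h
    by_cases hJT : J = ⊤
    · rw [hJT]; exact le_top
    have hIq : I ^ q ≤ J * a ^ (q - 1) := by
      calc I ^ q ≤ (J ^ (1/q) * a ^ (1 - 1/q)) ^ q :=
            ENNReal.rpow_le_rpow holder hq0.le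
        _ = (J ^ (1/q)) ^ q * (a ^ (1 - 1/q)) ^ q :=
            ENNReal.mul_rpow_of_nonneg _ _ hq0.le
        _ = J ^ ((1/q) * q) * a ^ ((1 - 1/q) * q) := by
            rw [← ENNReal.rpow_mul, ← ENNReal.rpow_mul]
        _ = J * a ^ (q - 1) := by
            rw [one_div_mul_cancel hq0.ne', ENNReal.rpow_one]
            congr 1
            field_simp
    have haq0 : a ^ q ≠ 0 := by
      simp [ENNReal.rpow_eq_zero_iff, ha0, haT]
    have haqT : a ^ q ≠ ⊤ := ENNReal.rpow_ne_top_of_nonneg hq0.le haT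
    have hpow0 : a ^ (q - 1) ≠ 0 := by
      simp [ENNReal.rpow_eq_zero_iff, ha0, haT]
    have hpowT : a ^ (q - 1) ≠ ⊤ :=
      ENNReal.rpow_ne_top_of_nonneg (by linarith) haT
    have hsplit : a ^ q = a ^ (q - 1) * a := by
      calc a ^ q = a ^ ((q - 1) + 1) := by ring_nf
        _ = a ^ (q - 1) * a ^ (1:ℝ) := ENNReal.rpow_add _ _ ha0 haT
        _ = a ^ (q - 1) * a := by rw [ENNReal.rpow_one]
    have hstep : J * a ^ (q - 1) / a ^ q = J / a := by
      rw [hsplit, mul_comm J, ENNReal.mul_div_mul_left _ _ hpow0 hpowT]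
    have hcq : c t ^ q ≤ J / a := by
      calc c t ^ q = I ^ q / a ^ q := by
            rw [hc]
            simp only []
            rw [ENNReal.div_rpow_of_nonneg _ _ hq0.le]
        _ ≤ J * a ^ (q - 1) / a ^ q := ENNReal.div_le_div_right hIq _
        _ = J / a := hstep
    exact (ENNReal.le_div_iff_mul_le (Or.inl ha0) (Or.inl haT)).mp hcq
  -- the main integral computation
  have key : (∫⁻ x in Ω, hardyOp B W g x ^ q)
      ≤ (N : ℝ≥0∞) * ∫⁻ x in Ω, F x := by
    calc (∫⁻ x in Ω, hardyOp B W g x ^ q)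
        = ∫⁻ x in Ω, ∑' t, (B t).indicator (fun _ => c t ^ q) x :=
          lintegral_congr fun x => hpt x
      _ = ∑' t, ∫⁻ x in Ω, (B t).indicator (fun _ => c t ^ q) x :=
          lintegral_tsum fun t => (measurable_const.indicator (hBmeas t)).aemeasurable
      _ ≤ ∑' t, ∫⁻ y in W t, F y := by
          refine ENNReal.tsum_le_tsum fun t => ?_
          rw [lintegral_indicator (hBmeas t), Measure.restrict_restrict (hBmeas t),
            setLIntegral_const]
          calc c t ^ q * volume (B t ∩ Ω) ≤ c t ^ q * volume (W t) :=
                mul_le_mul_right (measure_mono ((Set.inter_subset_left).trans (hBW t))) _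
            _ ≤ ∫⁻ y in W t, F y := jensen t
      _ = ∑' t, ∫⁻ x in Ω, (W t).indicator F x := by
          refine tsum_congr fun t => ?_
          rw [lintegral_indicator (hWmeas t), Measure.restrict_restrict (hWmeas t),
            Set.inter_eq_self_of_subset_left (hWΩ t)]
      _ = ∫⁻ x in Ω, ∑' t, (W t).indicator F x :=
          (lintegral_tsum fun t => (hFmeas.indicator (hWmeas t)).aemeasurable).symm
      _ = ∫⁻ x in Ω, (∑' t, (W t).indicator (fun _ => (1:ℝ≥0∞)) x) * F x := by
          refine lintegral_congr fun x => ?_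
          rw [← ENNReal.tsum_mul_right]
          refine tsum_congr fun t => ?_
          by_cases hx : x ∈ W t <;> simp [hx]
      _ ≤ ∫⁻ x in Ω, (N : ℝ≥0∞) * F x := by
          refine lintegral_mono_ae ?_
          filter_upwards [hoverlap] with x hx
          exact mul_le_mul_left hx _
      _ = (N : ℝ≥0∞) * ∫⁻ x in Ω, F x := lintegral_const_mul _ hFmeas
  -- conclude
  have hNle : ((N : ℝ≥0∞)) ^ (1/q)
      ≤ ENNReal.ofReal (2 * (q * N / (q - 1)) ^ (1 / q)) := by
    have h1 : (N:ℝ) ≤ q * N / (q - 1) := by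
      rw [le_div_iff₀ (by linarith)]
      have hN1 : (1:ℝ) ≤ (N:ℝ) := by exact_mod_cast hN
      nlinarith
    have h2 : (N:ℝ) ^ (1/q) ≤ (q * N / (q - 1)) ^ (1/q) :=
      Real.rpow_le_rpow (Nat.cast_nonneg _) h1 hq0'
    have h3 : (N:ℝ) ^ (1/q) ≤ 2 * (q * N / (q - 1)) ^ (1/q) := by
      nlinarith [Real.rpow_nonneg (Nat.cast_nonneg (α := ℝ) N) (1/q)]
    calc ((N : ℝ≥0∞)) ^ (1/q) = (ENNReal.ofReal (N:ℝ)) ^ (1/q) := by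
          rw [ENNReal.ofReal_natCast]
      _ = ENNReal.ofReal ((N:ℝ) ^ (1/q)) :=
          ENNReal.ofReal_rpow_of_nonneg (Nat.cast_nonneg _) hq0'
      _ ≤ _ := ENNReal.ofReal_le_ofReal h3
  calc (∫⁻ x in Ω, hardyOp B W g x ^ q) ^ (1 / q)
      ≤ ((N : ℝ≥0∞) * ∫⁻ x in Ω, F x) ^ (1 / q) :=
        ENNReal.rpow_le_rpow key hq0'
    _ = ((N : ℝ≥0∞)) ^ (1/q) * (∫⁻ x in Ω, F x) ^ (1/q) :=
        ENNReal.mul_rpow_of_nonneg _ _ hq0'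
    _ ≤ ENNReal.ofReal (2 * (q * N / (q - 1)) ^ (1 / q)) *
        (∫⁻ x in Ω, F x) ^ (1/q) := mul_le_mul_left hNle _
end

section
/- Let Ω ⊆ R^n be a bounded domain, ω a positive weight with ω^p ∈ L^1(Ω), and 1 < p,q < ∞ conjugate. Let {U_t}_{t∈Γ} be a countable cover of Ω (up to null sets) by open subsets with overlap bounded by N. Suppose: (i) for a constant C_1, for every t and every u ∈ L^p(U_t, ω^p) one has inf_c ‖u-c‖_{L^p(U_t, ω^p)} ≤ C_1 (∫_{U_t}∫_{U_t} |u(x)-u(y)|^p μ(x,y) dy dx)^{1/p} for a fixed nonnegative measurable kernel μ on Ω×Ω; (ii) every g ∈ L^q(Ω, ω^{-q}) with ∫_Ω g = 0 and support meeting finitely many U_t admits a decomposition g = Σ_t g_t with supp(g_t) ⊆ U_t, ∫_{U_t} g_t = 0, only finitely many g_t nonzero, and Σ_t ‖g_t‖^q_{L^q(U_t,ω^{-q})} ≤ C_0^q ‖g‖^q_{L^q(Ω,ω^{-q})}; (iii) the span of such g together with ω^p·(constants) is dense in L^q(Ω,ω^{-q}) with ‖g‖ ≤ 2‖g + αω^p‖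 for such elements. Then for every u ∈ L^p(Ω, ω^p), ‖u - u_{Ω,ω}‖_{L^p(Ω,ω^p)} ≤ 2 C_0 C_1 (Σ_t ∫_{U_t}∫_{U_t} |u(x)-u(y)|^p μ(x,y) dy dx)^{1/p}, where u_{Ω,ω} = (∫_Ω u ω^p)/(∫_Ω ω^p). -/
open MeasureTheory Metric Set ENNReal

open Filter Topology

/-!
Duality. Put `v = u - u_{Ω,ω}`, so that `v ⊥ ω^p`, and `f = v |v|^(p-2) ω^p`, for which
`⟨v, f⟩ = ‖v‖_p^p = ‖f‖_q^q`. For a mean-zero `g` of finite support, decompose `g = ∑ g_t`; as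
`g_t` has mean zero on `U_t`, `⟨v, g_t⟩ = ⟨v - c, g_t⟩` for every constant `c`, so Hölder on
`U_t`, the local inequality, Hölder for the sum over `t` and the decomposition bound give
`⟨v, g⟩ ≤ C₀ C₁ E^(1/p) ‖g‖_q`, with `E` the sum of the local energies. Approximating `f` by
`g + α ω^p` (the `α`-part is invisible to `v`), with `‖g‖_q ≤ 2 ‖g + α ω^p‖_q ≈ 2 ‖f‖_q`, yields
`‖v‖_p^p ≤ 2 C₀ C₁ E^(1/p) ‖v‖_p^(p/q)`, i.e. `‖v‖_p ≤ 2 C₀ C₁ E^(1/p)`.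
-/

theorem ENNReal.le_of_forall_pos_le_add_mul_rpow {a b c : ℝ≥0∞} {r : ℝ} (hc : c ≠ ⊤) (hr : 0 < r)
    (h : ∀ ε : ℝ≥0∞, 0 < ε → a ≤ b + c * ε ^ r) : a ≤ b := by
  have hlim : Tendsto (fun ε : ℝ≥0∞ => b + c * ε ^ r) (𝓝[>] 0) (𝓝 b) := by
    have hpow : Tendsto (fun ε : ℝ≥0∞ => ε ^ r) (𝓝 0) (𝓝 0) := by
      simpa [ENNReal.zero_rpow_of_pos hr] using
        ((ENNReal.continuous_rpow_const (y := r)).tendsto 0)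
    simpa using (tendsto_const_nhds.add (ENNReal.Tendsto.const_mul hpow (Or.inr hc))).mono_left
      nhdsWithin_le_nhds
  exact ge_of_tendsto hlim (eventually_nhdsWithin_of_forall h)

theorem ENNReal.le_rpow_of_le_mul_rpow {a M : ℝ≥0∞} {p q : ℝ} (hpq : p.HolderConjugate q)
    (ha : a ≠ ⊤) (h : a ≤ M * a ^ (1 / q)) : a ≤ M ^ p := by
  rcases eq_or_ne a 0 with rfl | ha₀
  · exact zero_le
  have hsplit : a = a ^ (1 / p) * a ^ (1 / q) := by
    rw [← rpow_add_of_nonneg _ _ (by simp [hpq.pos.le]) (by simp [hpq.symm.pos.le]), one_div,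
      one_div, hpq.inv_add_inv_eq_one, rpow_one]
  have hroot : a ^ (1 / p) ≤ M := by
    refine (ENNReal.mul_le_mul_iff_left (rpow_pos ha₀.bot_lt ha).ne'
      (rpow_ne_top_of_nonneg (one_div_pos.mpr hpq.symm.pos).le ha)).mp ?_
    rwa [← hsplit]
  calc a = (a ^ (1 / p)) ^ p := by rw [← rpow_mul, one_div_mul_cancel hpq.ne_zero, rpow_one]
    _ ≤ M ^ p := rpow_le_rpow hroot hpq.pos.le

theorem abs_mul_abs_rpow_sub_two_rpow_mul_rpow_neg {p q : ℝ} (hpq : p.HolderConjugate q)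
    (v : ℝ) {w : ℝ} (hw : 0 < w) :
    |v * |v| ^ (p - 2) * w ^ p| ^ q * w ^ (-q) = |v| ^ p * w ^ p := by
  have hv : |v * |v| ^ (p - 2)| = |v| ^ (p - 1) := by
    rw [abs_mul, abs_of_nonneg (Real.rpow_nonneg (abs_nonneg v) _),
      show p - 1 = 1 + (p - 2) by ring, Real.rpow_add' (abs_nonneg v) (by linarith [hpq.lt]), Real.rpow_one]
  rw [abs_mul, hv, abs_of_pos (Real.rpow_pos_of_pos hw p),
    Real.mul_rpow (Real.rpow_nonneg (abs_nonneg v) _) (Real.rpow_pos_of_pos hw p).le,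
    ← Real.rpow_mul (abs_nonneg v), ← Real.rpow_mul hw.le, hpq.sub_one_mul_conj, mul_assoc,
    ← Real.rpow_add hw, hpq.mul_eq_add, add_neg_cancel_right]

theorem mul_mul_abs_rpow_sub_two {p : ℝ} (hp : p ≠ 0) (v : ℝ) :
    v * (v * |v| ^ (p - 2)) = |v| ^ p := by
  rw [← mul_assoc, ← abs_mul_abs_self, ← sq, ← Real.rpow_natCast,
    ← Real.rpow_add' (abs_nonneg v) (by simpa using hp)]
  norm_num

theorem ENNReal.ofReal_mul_ofReal_le (a b : ℝ) :
    ENNReal.ofReal a * ENNReal.ofReal b ≤ ENNReal.ofReal (a * b) := by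
  rcases le_or_gt 0 a with ha | ha
  · rw [ENNReal.ofReal_mul ha]
  · rw [ENNReal.ofReal_of_nonpos ha.le, zero_mul]
    exact zero_le

theorem integral_sub_div_integral_mul_eq_zero {X : Type*} [MeasurableSpace X] {μ : Measure X}
    {u h : X → ℝ} (hh₀ : 0 ≤ᵐ[μ] h) (hh : Integrable h μ)
    (huh : Integrable (fun x => u x * h x) μ) :
    ∫ x, (u x - (∫ z, u z * h z ∂μ) / ∫ z, h z ∂μ) * h x ∂μ = 0 := by
  simp_rw [sub_mul]
  rw [integral_sub huh (hh.const_mul _), integral_const_mul]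
  rcases eq_or_ne (∫ z, h z ∂μ) 0 with h₀ | h₀
  · have huh₀ : ∫ z, u z * h z ∂μ = 0 := by
      refine integral_eq_zero_of_ae ?_
      filter_upwards [(integral_eq_zero_iff_of_nonneg_ae hh₀ hh).mp h₀] with x hx
      simp [hx]
    rw [huh₀, h₀]; simp
  · rw [div_mul_cancel₀ _ h₀, sub_self]

theorem integral_mul_eq_add_of_integral_mul_eq_zero {X : Type*} [MeasurableSpace X]
    {μ : Measure X} {v f g w : X → ℝ} (α : ℝ) (hvg : Integrable (fun x => v x * g x) μ)
    (hvw : Integrable (fun x => v x * w x) μ)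
    (hvr : Integrable (fun x => v x * (f x - (g x + α * w x))) μ)
    (hvw₀ : ∫ x, v x * w x ∂μ = 0) :
    ∫ x, v x * f x ∂μ = (∫ x, v x * g x ∂μ) + ∫ x, v x * (f x - (g x + α * w x)) ∂μ := by
  have hpt : ∀ x, v x * f x = v x * g x + α * (v x * w x) + v x * (f x - (g x + α * w x)) :=
    fun x => by ring
  simp_rw [hpt]
  rw [integral_add (f := fun x => v x * g x + α * (v x * w x)) (hvg.add (hvw.const_mul α)) hvr,
    integral_add hvg (hvw.const_mul α), integral_const_mul, hvw₀, mul_zero, add_zero]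

section Weighted

variable {X : Type*} [MeasurableSpace X] {ν : Measure X} {s : Set X}

/-- `‖a‖^r` in `L^r(s, W dν)`; the paper's spaces are `L^p(Ω, ω^p)` and `L^q(Ω, ω^{-q})`. -/
noncomputable def weightedLpPow (ν : Measure X) (s : Set X) (W : X → ℝ) (r : ℝ) (a : X → ℝ) :
    ℝ≥0∞ :=
  ∫⁻ x in s, ENNReal.ofReal (|a x| ^ r * W x) ∂ν

theorem weightedLpPow_eq_lintegral_rpow (hs : MeasurableSet s) {W : X → ℝ}
    (hW : ∀ x ∈ s, 0 ≤ W x) {r : ℝ} (hr : 0 < r) (a : X → ℝ) :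
    weightedLpPow ν s W r a = ∫⁻ x in s, ENNReal.ofReal (|a x| * W x ^ (1 / r)) ^ r ∂ν := by
  refine setLIntegral_congr_fun hs fun x hx => ?_
  rw [ENNReal.ofReal_rpow_of_nonneg (mul_nonneg (abs_nonneg _) (Real.rpow_nonneg (hW x hx) _))
    hr.le, Real.mul_rpow (abs_nonneg _) (Real.rpow_nonneg (hW x hx) _), ← Real.rpow_mul (hW x hx),
    one_div_mul_cancel hr.ne', Real.rpow_one]

theorem weightedLpPow_const_ne_top {W : X → ℝ} (hW : IntegrableOn W s ν) (r c : ℝ) :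
    weightedLpPow ν s W r (fun _ => c) ≠ ⊤ := by
  simp only [weightedLpPow, ENNReal.ofReal_mul (Real.rpow_nonneg (abs_nonneg c) r)]
  rw [lintegral_const_mul' _ _ ofReal_ne_top]
  exact mul_ne_top ofReal_ne_top hW.lintegral_lt_top.ne

theorem weightedLpPow_sub_rpow_le (hs : MeasurableSet s) {W a b : X → ℝ} (hW : Measurable W)
    (hW₀ : ∀ x ∈ s, 0 ≤ W x) (ha : Measurable a) (hb : Measurable b) {r : ℝ} (hr : 1 ≤ r) :
    weightedLpPow ν s W r (fun x => a x - b x) ^ (1 / r) ≤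
      weightedLpPow ν s W r a ^ (1 / r) + weightedLpPow ν s W r b ^ (1 / r) := by
  have hr₀ : 0 < r := zero_lt_one.trans_le hr
  simp only [weightedLpPow_eq_lintegral_rpow hs hW₀ hr₀]
  set F : X → ℝ≥0∞ := fun x => ENNReal.ofReal (|a x| * W x ^ (1 / r))
  set G : X → ℝ≥0∞ := fun x => ENNReal.ofReal (|b x| * W x ^ (1 / r))
  have hFG : ∀ x ∈ s, ENNReal.ofReal (|a x - b x| * W x ^ (1 / r)) ^ r ≤ (F + G) x ^ r := by
    intro x hx
    have hWx := Real.rpow_nonneg (hW₀ x hx) (1 / r)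
    gcongr
    rw [Pi.add_apply, ← ENNReal.ofReal_add (by positivity) (by positivity), ← add_mul]
    gcongr
    exact abs_sub _ _
  calc (∫⁻ x in s, ENNReal.ofReal (|a x - b x| * W x ^ (1 / r)) ^ r ∂ν) ^ (1 / r)
      ≤ (∫⁻ x in s, (F + G) x ^ r ∂ν) ^ (1 / r) :=
        ENNReal.rpow_le_rpow (setLIntegral_mono (by fun_prop) hFG) (by positivity)
    _ ≤ _ := ENNReal.lintegral_Lp_add_le (by fun_prop) (by fun_prop) hr

theorem weightedLpPow_sub_ne_top (hs : MeasurableSet s) {W a b : X → ℝ} (hW : Measurable W)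
    (hW₀ : ∀ x ∈ s, 0 ≤ W x) (ha : Measurable a) (hb : Measurable b) {r : ℝ} (hr : 1 ≤ r)
    (ha' : weightedLpPow ν s W r a ≠ ⊤) (hb' : weightedLpPow ν s W r b ≠ ⊤) :
    weightedLpPow ν s W r (fun x => a x - b x) ≠ ⊤ := by
  have hr₀ : 0 < 1 / r := one_div_pos.mpr (zero_lt_one.trans_le hr)
  rw [← lt_top_iff_ne_top, ← ENNReal.rpow_lt_top_iff_of_pos hr₀]
  exact (weightedLpPow_sub_rpow_le hs hW hW₀ ha hb hr).trans_lt
    (add_lt_top.mpr ⟨rpow_lt_top_of_nonneg hr₀.le ha', rpow_lt_top_of_nonneg hr₀.le hb'⟩)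

theorem weightedLpPow_rpow_le_of_le_two_rpow_mul (hs : MeasurableSet s) {W f g h : X → ℝ}
    (hW : Measurable W) (hW₀ : ∀ x ∈ s, 0 ≤ W x) (hf : Measurable f) (hh : Measurable h) {r : ℝ}
    (hr : 1 ≤ r) (hgh : weightedLpPow ν s W r g ≤ 2 ^ r * weightedLpPow ν s W r h) :
    weightedLpPow ν s W r g ^ (1 / r) ≤
      2 * (weightedLpPow ν s W r f ^ (1 / r) +
        weightedLpPow ν s W r (fun x => f x - h x) ^ (1 / r)) := by
  have hr₀ : 0 < r := zero_lt_one.trans_le hr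
  calc weightedLpPow ν s W r g ^ (1 / r)
      ≤ (2 ^ r * weightedLpPow ν s W r h) ^ (1 / r) := rpow_le_rpow hgh (by positivity)
    _ = 2 * weightedLpPow ν s W r (fun x => f x - (f x - h x)) ^ (1 / r) := by
        rw [mul_rpow_of_nonneg _ _ (by positivity), ← rpow_mul, mul_one_div_cancel hr₀.ne',
          rpow_one]
        simp only [_root_.sub_sub_cancel]
    _ ≤ _ := by
        gcongr
        exact weightedLpPow_sub_rpow_le hs hW hW₀ hf (hf.sub hh) hr

variable {p q : ℝ} {ω : X → ℝ}

theorem lintegral_enorm_mul_le_weightedLpPow (hs : MeasurableSet s) (hpq : p.HolderConjugate q)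
    (hω : Measurable ω) (hω₀ : ∀ x ∈ s, 0 < ω x) {a b : X → ℝ} (ha : Measurable a)
    (hb : Measurable b) :
    ∫⁻ x in s, ‖a x * b x‖ₑ ∂ν ≤
      weightedLpPow ν s (fun x => ω x ^ p) p a ^ (1 / p) *
        weightedLpPow ν s (fun x => ω x ^ (-q)) q b ^ (1 / q) := by
  rw [weightedLpPow_eq_lintegral_rpow hs (fun x hx => (Real.rpow_pos_of_pos (hω₀ x hx) p).le)
      hpq.pos, weightedLpPow_eq_lintegral_rpow hs
      (fun x hx => (Real.rpow_pos_of_pos (hω₀ x hx) _).le) hpq.symm.pos]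
  calc ∫⁻ x in s, ‖a x * b x‖ₑ ∂ν
      = ∫⁻ x in s, ENNReal.ofReal (|a x| * (ω x ^ p) ^ (1 / p)) *
          ENNReal.ofReal (|b x| * (ω x ^ (-q)) ^ (1 / q)) ∂ν := by
        refine setLIntegral_congr_fun hs fun x hx => ?_
        have hωx := hω₀ x hx
        rw [← Real.rpow_mul hωx.le, ← Real.rpow_mul hωx.le, mul_one_div_cancel hpq.ne_zero,
          neg_mul, mul_one_div_cancel hpq.symm.ne_zero, Real.rpow_one, Real.rpow_neg_one,
          Real.enorm_eq_ofReal_abs, ← ENNReal.ofReal_mul (by positivity), abs_mul]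
        congr 1
        field_simp
    _ ≤ _ := ENNReal.lintegral_mul_le_Lp_mul_Lq _ hpq (by fun_prop) (by fun_prop)

theorem enorm_setIntegral_mul_le_weightedLpPow (hs : MeasurableSet s)
    (hpq : p.HolderConjugate q) (hω : Measurable ω) (hω₀ : ∀ x ∈ s, 0 < ω x) {a b : X → ℝ}
    (ha : Measurable a) (hb : Measurable b) :
    ‖∫ x in s, a x * b x ∂ν‖ₑ ≤
      weightedLpPow ν s (fun x => ω x ^ p) p a ^ (1 / p) *
        weightedLpPow ν s (fun x => ω x ^ (-q)) q b ^ (1 / q) :=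
  (enorm_integral_le_lintegral_enorm _).trans
    (lintegral_enorm_mul_le_weightedLpPow hs hpq hω hω₀ ha hb)

theorem integrableOn_mul_of_weightedLpPow_ne_top (hs : MeasurableSet s)
    (hpq : p.HolderConjugate q) (hω : Measurable ω) (hω₀ : ∀ x ∈ s, 0 < ω x) {a b : X → ℝ}
    (ha : Measurable a) (hb : Measurable b)
    (ha' : weightedLpPow ν s (fun x => ω x ^ p) p a ≠ ⊤)
    (hb' : weightedLpPow ν s (fun x => ω x ^ (-q)) q b ≠ ⊤) :
    IntegrableOn (fun x => a x * b x) s ν :=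
  ⟨(ha.mul hb).aestronglyMeasurable,
    (lintegral_enorm_mul_le_weightedLpPow hs hpq hω hω₀ ha hb).trans_lt
      (mul_lt_top (rpow_lt_top_of_nonneg (by simp [hpq.pos.le]) ha')
        (rpow_lt_top_of_nonneg (by simp [hpq.symm.pos.le]) hb'))⟩

theorem weightedLpPow_dual_eq (hs : MeasurableSet s) (hpq : p.HolderConjugate q)
    (hω₀ : ∀ x ∈ s, 0 < ω x) (v : X → ℝ) :
    weightedLpPow ν s (fun x => ω x ^ (-q)) q (fun x => v x * |v x| ^ (p - 2) * ω x ^ p) =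
      weightedLpPow ν s (fun x => ω x ^ p) p v :=
  setLIntegral_congr_fun hs fun x hx => by
    rw [abs_mul_abs_rpow_sub_two_rpow_mul_rpow_neg hpq (v x) (hω₀ x hx)]

theorem ofReal_setIntegral_mul_dual_eq (hs : MeasurableSet s) (hpq : p.HolderConjugate q)
    (hω : Measurable ω) (hω₀ : ∀ x ∈ s, 0 < ω x) {v : X → ℝ} (hv : Measurable v)
    (hv' : weightedLpPow ν s (fun x => ω x ^ p) p v ≠ ⊤) :
    ENNReal.ofReal (∫ x in s, v x * (v x * |v x| ^ (p - 2) * ω x ^ p) ∂ν) =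
      weightedLpPow ν s (fun x => ω x ^ p) p v := by
  have hvf : ∀ x, v x * (v x * |v x| ^ (p - 2) * ω x ^ p) = |v x| ^ p * ω x ^ p := fun x => by
    rw [← mul_mul_abs_rpow_sub_two hpq.pos.ne' (v x)]; ring
  rw [ofReal_integral_eq_lintegral_ofReal (integrableOn_mul_of_weightedLpPow_ne_top hs hpq hω hω₀
    hv (by fun_prop) hv' ((weightedLpPow_dual_eq hs hpq hω₀ v).trans_ne hv'))]
  · simp only [hvf]
    rfl
  · filter_upwards [ae_restrict_mem hs] with x hx
    rw [Pi.zero_apply, hvf]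
    exact mul_nonneg (Real.rpow_nonneg (abs_nonneg _) _) (Real.rpow_pos_of_pos (hω₀ x hx) p).le

theorem enorm_setIntegral_mul_le_iInf (hs : MeasurableSet s) (hpq : p.HolderConjugate q)
    (hω : Measurable ω) (hω₀ : ∀ x ∈ s, 0 < ω x) (hωp : IntegrableOn (fun x => ω x ^ p) s ν)
    {v g : X → ℝ} (hv : Measurable v) (hv' : weightedLpPow ν s (fun x => ω x ^ p) p v ≠ ⊤)
    (hg : Measurable g) (hg' : weightedLpPow ν s (fun x => ω x ^ (-q)) q g ≠ ⊤)
    (hg₀ : ∫ x in s, g x ∂ν = 0) :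
    ‖∫ x in s, v x * g x ∂ν‖ₑ ≤
      (⨅ c : ℝ, weightedLpPow ν s (fun x => ω x ^ p) p (fun x => v x - c)) ^ (1 / p) *
        weightedLpPow ν s (fun x => ω x ^ (-q)) q g ^ (1 / q) := by
  have hg_int : IntegrableOn g s ν := by
    simpa using integrableOn_mul_of_weightedLpPow_ne_top hs hpq hω hω₀ measurable_const hg
      (weightedLpPow_const_ne_top hωp p 1) hg'
  have hvg_int := integrableOn_mul_of_weightedLpPow_ne_top hs hpq hω hω₀ hv hg hv' hg'
  have hshift : ∀ c : ℝ, ∫ x in s, v x * g x ∂ν = ∫ x in s, (v x - c) * g x ∂ν := by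
    intro c
    simp_rw [sub_mul]
    rw [integral_sub hvg_int (hg_int.const_mul c), integral_const_mul, hg₀, mul_zero, sub_zero]
  have hrpow_iInf : (⨅ c : ℝ, weightedLpPow ν s (fun x => ω x ^ p) p (fun x => v x - c)) ^ (1 / p)
      = ⨅ c : ℝ, weightedLpPow ν s (fun x => ω x ^ p) p (fun x => v x - c) ^ (1 / p) :=
    (ENNReal.orderIsoRpow (1 / p) (by simp [hpq.pos])).map_iInf _
  rw [hrpow_iInf, ENNReal.iInf_mul
    (fun h => absurd h (rpow_ne_top_of_nonneg (by simp [hpq.symm.pos.le]) hg'))]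
  exact le_iInf fun c => (hshift c).symm ▸
    enorm_setIntegral_mul_le_weightedLpPow hs hpq hω hω₀ (hv.sub_const c) hg

theorem enorm_setIntegral_mul_le_of_decomposition {Γ : Type*} (hs : MeasurableSet s)
    {U : Γ → Set X} (hU : ∀ t, MeasurableSet (U t)) (hUs : ∀ t, U t ⊆ s)
    (hpq : p.HolderConjugate q) (hω : Measurable ω) (hω₀ : ∀ x ∈ s, 0 < ω x)
    (hωp : IntegrableOn (fun x => ω x ^ p) s ν) {v : X → ℝ} (hv : Measurable v)
    (hv' : weightedLpPow ν s (fun x => ω x ^ p) p v ≠ ⊤) {C₀ C₁ : ℝ} {E : Γ → ℝ≥0∞}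
    (hlocal : ∀ t, ⨅ c : ℝ, weightedLpPow ν (U t) (fun x => ω x ^ p) p (fun x => v x - c) ≤
      ENNReal.ofReal C₁ ^ p * E t)
    {g : X → ℝ} (hg' : weightedLpPow ν s (fun x => ω x ^ (-q)) q g ≠ ⊤) {gt : Γ → X → ℝ}
    (hfin : {t | gt t ≠ 0}.Finite) (hgt : ∀ t, Measurable (gt t))
    (hsum : ∀ x ∈ s, g x = ∑' t, gt t x) (hsupp : ∀ t, Function.support (gt t) ⊆ U t)
    (hmean : ∀ t, ∫ x in U t, gt t x ∂ν = 0)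
    (hbound : ∑' t, weightedLpPow ν (U t) (fun x => ω x ^ (-q)) q (gt t) ≤
      ENNReal.ofReal C₀ ^ q * weightedLpPow ν s (fun x => ω x ^ (-q)) q g) :
    ‖∫ x in s, v x * g x ∂ν‖ₑ ≤
      ENNReal.ofReal C₀ * ENNReal.ofReal C₁ * (∑' t, E t) ^ (1 / p) *
        weightedLpPow ν s (fun x => ω x ^ (-q)) q g ^ (1 / q) := by
  set S := hfin.toFinset
  set B := fun t => weightedLpPow ν (U t) (fun x => ω x ^ (-q)) q (gt t)
  have hp₀ := hpq.pos
  have hq₀ := hpq.symm.pos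
  have hB : ∀ t, B t ≠ ⊤ := fun t => ne_top_of_le_ne_top
    (mul_ne_top (rpow_ne_top_of_nonneg hq₀.le ofReal_ne_top) hg')
    ((ENNReal.le_tsum t).trans hbound)
  have hvU : ∀ t, weightedLpPow ν (U t) (fun x => ω x ^ p) p v ≠ ⊤ := fun t =>
    ne_top_of_le_ne_top hv' (lintegral_mono_set (hUs t))
  have hωU : ∀ t, ∀ x ∈ U t, 0 < ω x := fun t x hx => hω₀ x (hUs t hx)
  have hvanish : ∀ t, ∀ x ∈ s \ U t, v x * gt t x = 0 := fun t x hx => by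
    rw [Function.notMem_support.mp (fun h => hx.2 (hsupp t h)), mul_zero]
  have hint : ∀ t, IntegrableOn (fun x => v x * gt t x) s ν := fun t =>
    (integrableOn_mul_of_weightedLpPow_ne_top (hU t) hpq hω (hωU t) hv (hgt t) (hvU t)
      (hB t)).of_forall_sdiff_eq_zero hs (hvanish t)
  have hsplit : ∫ x in s, v x * g x ∂ν = ∑ t ∈ S, ∫ x in s, v x * gt t x ∂ν := by
    rw [← integral_finsetSum _ fun t _ => hint t]
    refine setIntegral_congr_fun hs fun x hx => ?_
    have hsum_fin : ∑' t, gt t x = ∑ t ∈ S, gt t x :=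
      tsum_eq_sum fun t ht => by simp [not_not.mp (mt hfin.mem_toFinset.mpr ht)]
    rw [hsum x hx, hsum_fin, Finset.mul_sum]
  have hpiece : ∀ t, ‖∫ x in s, v x * gt t x ∂ν‖ₑ ≤
      (ENNReal.ofReal C₁ ^ p * E t) ^ (1 / p) * B t ^ (1 / q) := fun t => by
    rw [setIntegral_eq_of_subset_of_forall_sdiff_eq_zero hs (hUs t) (hvanish t)]
    refine (enorm_setIntegral_mul_le_iInf (hU t) hpq hω (hωU t) (hωp.mono_set (hUs t)) hv (hvU t)
      (hgt t) (hB t) (hmean t)).trans ?_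
    gcongr
    exact hlocal t
  calc ‖∫ x in s, v x * g x ∂ν‖ₑ
      ≤ ∑ t ∈ S, ‖∫ x in s, v x * gt t x ∂ν‖ₑ := hsplit ▸ enorm_sum_le _ _
    _ ≤ ∑ t ∈ S, (ENNReal.ofReal C₁ ^ p * E t) ^ (1 / p) * B t ^ (1 / q) :=
        Finset.sum_le_sum fun t _ => hpiece t
    _ ≤ (∑ t ∈ S, ENNReal.ofReal C₁ ^ p * E t) ^ (1 / p) * (∑ t ∈ S, B t) ^ (1 / q) := by
        simpa only [← rpow_mul, one_div_mul_cancel hp₀.ne', one_div_mul_cancel hq₀.ne', rpow_one]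
          using ENNReal.inner_le_Lp_mul_Lq S
            (fun t => (ENNReal.ofReal C₁ ^ p * E t) ^ (1 / p)) (fun t => B t ^ (1 / q)) hpq
    _ ≤ (ENNReal.ofReal C₁ ^ p * ∑' t, E t) ^ (1 / p) *
          (ENNReal.ofReal C₀ ^ q * weightedLpPow ν s (fun x => ω x ^ (-q)) q g) ^ (1 / q) := by
        rw [← Finset.mul_sum]
        gcongr
        · exact ENNReal.sum_le_tsum S
        · exact (ENNReal.sum_le_tsum S).trans hbound
    _ = _ := by
        rw [mul_rpow_of_nonneg _ _ (by positivity), mul_rpow_of_nonneg _ _ (by positivity),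
          ← rpow_mul, ← rpow_mul, mul_one_div_cancel hp₀.ne', mul_one_div_cancel hq₀.ne',
          rpow_one, rpow_one]
        ring

theorem weightedLpPow_le_of_dual_bound (hs : MeasurableSet s) (hpq : p.HolderConjugate q)
    (hω : Measurable ω) (hω₀ : ∀ x ∈ s, 0 < ω x) {v : X → ℝ} (hv : Measurable v)
    (hv' : weightedLpPow ν s (fun x => ω x ^ p) p v ≠ ⊤)
    (hvω : IntegrableOn (fun x => v x * ω x ^ p) s ν) (hvω₀ : ∫ x in s, v x * ω x ^ p ∂ν = 0)
    {W : (X → ℝ) → Prop} {K : ℝ≥0∞}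
    (hW : ∀ g, W g → Measurable g → weightedLpPow ν s (fun x => ω x ^ (-q)) q g ≠ ⊤ →
      ‖∫ x in s, v x * g x ∂ν‖ₑ ≤ K * weightedLpPow ν s (fun x => ω x ^ (-q)) q g ^ (1 / q))
    (hdense : ∀ f, Measurable f → weightedLpPow ν s (fun x => ω x ^ (-q)) q f ≠ ⊤ →
      ∀ ε : ℝ≥0∞, 0 < ε → ∃ (g : X → ℝ) (α : ℝ), Measurable g ∧ W g ∧
        weightedLpPow ν s (fun x => ω x ^ (-q)) q g ≠ ⊤ ∧
        weightedLpPow ν s (fun x => ω x ^ (-q)) q g ≤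
          2 ^ q * weightedLpPow ν s (fun x => ω x ^ (-q)) q (fun x => g x + α * ω x ^ p) ∧
        weightedLpPow ν s (fun x => ω x ^ (-q)) q (fun x => f x - (g x + α * ω x ^ p)) < ε) :
    weightedLpPow ν s (fun x => ω x ^ p) p v ≤ (2 * K) ^ p := by
  set I := weightedLpPow ν s (fun x => ω x ^ p) p v
  set Nq := weightedLpPow ν s (fun x => ω x ^ (-q)) q
  have hp₀ := hpq.pos
  have hq₀ := hpq.symm.pos
  rcases eq_or_ne K ⊤ with rfl | hK
  · rw [mul_top two_ne_zero, top_rpow_of_pos hp₀]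
    exact le_top
  set f : X → ℝ := fun x => v x * |v x| ^ (p - 2) * ω x ^ p
  have hf : Measurable f := by fun_prop
  have hfq : Nq f = I := weightedLpPow_dual_eq hs hpq hω₀ v
  have hI : ENNReal.ofReal (∫ x in s, v x * f x ∂ν) = I :=
    ofReal_setIntegral_mul_dual_eq hs hpq hω hω₀ hv hv'
  have hkey : ∀ ε : ℝ≥0∞, 0 < ε →
      I ≤ 2 * K * I ^ (1 / q) + (2 * K + I ^ (1 / p)) * ε ^ (1 / q) := by
    intro ε hε
    obtain ⟨g, α, hg, hWg, hg', hproj, hclose⟩ := hdense f hf (hfq.trans_ne hv') ε hε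
    set r : X → ℝ := fun x => f x - (g x + α * ω x ^ p)
    have hr : Measurable r := by fun_prop
    have hg_le : Nq g ^ (1 / q) ≤ 2 * (I ^ (1 / q) + Nq r ^ (1 / q)) := hfq ▸
      weightedLpPow_rpow_le_of_le_two_rpow_mul hs (by fun_prop)
        (fun x hx => (Real.rpow_pos_of_pos (hω₀ x hx) _).le) hf (by fun_prop) hpq.symm.lt.le hproj
    have hvg := integrableOn_mul_of_weightedLpPow_ne_top hs hpq hω hω₀ hv hg hv' hg'
    have hvr := integrableOn_mul_of_weightedLpPow_ne_top hs hpq hω hω₀ hv hr hv' hclose.ne_top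
    have hsplit := integral_mul_eq_add_of_integral_mul_eq_zero α hvg hvω hvr hvω₀
    calc I = ENNReal.ofReal ((∫ x in s, v x * g x ∂ν) + ∫ x in s, v x * r x ∂ν) := by
          rw [← hsplit, hI]
      _ ≤ ‖∫ x in s, v x * g x ∂ν‖ₑ + ‖∫ x in s, v x * r x ∂ν‖ₑ :=
          ofReal_add_le.trans (add_le_add (Real.ofReal_le_enorm _) (Real.ofReal_le_enorm _))
      _ ≤ K * Nq g ^ (1 / q) + I ^ (1 / p) * Nq r ^ (1 / q) :=
          add_le_add (hW g hWg hg hg') (enorm_setIntegral_mul_le_weightedLpPow hs hpq hω hω₀ hv hr)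
      _ ≤ K * (2 * (I ^ (1 / q) + Nq r ^ (1 / q))) + I ^ (1 / p) * Nq r ^ (1 / q) := by
          gcongr
      _ ≤ K * (2 * (I ^ (1 / q) + ε ^ (1 / q))) + I ^ (1 / p) * ε ^ (1 / q) := by
          have := hclose.le
          gcongr
      _ = 2 * K * I ^ (1 / q) + (2 * K + I ^ (1 / p)) * ε ^ (1 / q) := by ring
  refine ENNReal.le_rpow_of_le_mul_rpow hpq hv' (ENNReal.le_of_forall_pos_le_add_mul_rpow ?_
    (one_div_pos.mpr hq₀) hkey)
  exact add_ne_top.mpr ⟨mul_ne_top (by simp) hK, rpow_ne_top_of_nonneg (by positivity) hv'⟩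

end Weighted

theorem local_to_global_poincare_general
    (n : ℕ) (Ω : Set (EuclideanSpace ℝ (Fin n)))
    (hΩopen : IsOpen Ω)
    (p q : ℝ) (hp : 1 < p) (hpq : 1 / p + 1 / q = 1)
    (ω : EuclideanSpace ℝ (Fin n) → ℝ) (hωmeas : Measurable ω)
    (hωpos : ∀ x ∈ Ω, 0 < ω x)
    (hωLp : IntegrableOn (fun x => ω x ^ p) Ω volume)
    (Γ : Type*) (U : Γ → Set (EuclideanSpace ℝ (Fin n)))
    (hUopen : ∀ t, IsOpen (U t)) (hUΩ : ∀ t, U t ⊆ Ω)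
    (μk : EuclideanSpace ℝ (Fin n) → EuclideanSpace ℝ (Fin n) → ℝ≥0∞)
    (C₀ C₁ : ℝ)
    -- (i) the local inequality on each U_t with uniform constant C₁
    (hlocal : ∀ t, ∀ v : EuclideanSpace ℝ (Fin n) → ℝ, Measurable v →
      ⨅ c : ℝ, ∫⁻ x in U t, ENNReal.ofReal (|v x - c| ^ p * ω x ^ p) ≤
        ENNReal.ofReal C₁ ^ p *
          ∫⁻ x in U t, ∫⁻ y in U t, ENNReal.ofReal (|v x - v y| ^ p) * μk x y)
    -- (ii) C-orthogonal decompositions with constant C₀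
    (hdecomp : ∀ g : EuclideanSpace ℝ (Fin n) → ℝ, Measurable g →
      IntegrableOn g Ω volume → (∫ x in Ω, g x) = 0 →
      {t | (Function.support g ∩ U t).Nonempty}.Finite →
      (∫⁻ x in Ω, ENNReal.ofReal (|g x| ^ q * ω x ^ (-q))) ≠ ⊤ →
      ∃ gt : Γ → EuclideanSpace ℝ (Fin n) → ℝ,
        {t | gt t ≠ 0}.Finite ∧ (∀ t, Measurable (gt t)) ∧
        (∀ x ∈ Ω, g x = ∑' t, gt t x) ∧
        (∀ t, Function.support (gt t) ⊆ U t) ∧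
        (∀ t, (∫ x in U t, gt t x) = 0) ∧
        ∑' t, ∫⁻ x in U t, ENNReal.ofReal (|gt t x| ^ q * ω x ^ (-q)) ≤
          ENNReal.ofReal C₀ ^ q *
            ∫⁻ x in Ω, ENNReal.ofReal (|g x| ^ q * ω x ^ (-q)))
    -- (iii) density of W₀ ⊕ ω^p·C in L^q(Ω, ω^{-q}), with the projection bound
    (hdense : ∀ f : EuclideanSpace ℝ (Fin n) → ℝ, Measurable f →
      (∫⁻ x in Ω, ENNReal.ofReal (|f x| ^ q * ω x ^ (-q))) ≠ ⊤ →
      ∀ ε : ℝ≥0∞, 0 < ε →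
      ∃ (g : EuclideanSpace ℝ (Fin n) → ℝ) (α : ℝ), Measurable g ∧
        IntegrableOn g Ω volume ∧ (∫ x in Ω, g x) = 0 ∧
        {t | (Function.support g ∩ U t).Nonempty}.Finite ∧
        (∫⁻ x in Ω, ENNReal.ofReal (|g x| ^ q * ω x ^ (-q))) ≠ ⊤ ∧
        (∫⁻ x in Ω, ENNReal.ofReal (|g x| ^ q * ω x ^ (-q))) ≤
          (2 : ℝ≥0∞) ^ q *
            ∫⁻ x in Ω, ENNReal.ofReal (|g x + α * ω x ^ p| ^ q * ω x ^ (-q)) ∧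
        ∫⁻ x in Ω, ENNReal.ofReal (|f x - (g x + α * ω x ^ p)| ^ q * ω x ^ (-q)) < ε)
    -- the function u ∈ L^p(Ω, ω^p)
    (u : EuclideanSpace ℝ (Fin n) → ℝ) (hu : Measurable u)
    (huLp : ∫⁻ x in Ω, ENNReal.ofReal (|u x| ^ p * ω x ^ p) ≠ ⊤)
    (huω : IntegrableOn (fun x => u x * ω x ^ p) Ω volume) :
    ∫⁻ x in Ω, ENNReal.ofReal
        (|u x - (∫ z in Ω, u z * ω z ^ p) / (∫ z in Ω, ω z ^ p)| ^ p * ω x ^ p) ≤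
      ENNReal.ofReal (2 * C₀ * C₁) ^ p *
        ∑' t, ∫⁻ x in U t, ∫⁻ y in U t,
          ENNReal.ofReal (|u x - u y| ^ p) * μk x y := by
  have hpq' : p.HolderConjugate q :=
    Real.holderConjugate_iff.mpr ⟨hp, by simpa only [one_div] using hpq⟩
  have hΩ : MeasurableSet Ω := hΩopen.measurableSet
  have hωp₀ : ∀ x ∈ Ω, 0 ≤ ω x ^ p := fun x hx => (Real.rpow_pos_of_pos (hωpos x hx) p).le
  set c₀ := (∫ z in Ω, u z * ω z ^ p) / ∫ z in Ω, ω z ^ p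
  set v : EuclideanSpace ℝ (Fin n) → ℝ := fun x => u x - c₀
  set E : Γ → ℝ≥0∞ := fun t => ∫⁻ x in U t, ∫⁻ y in U t, ENNReal.ofReal (|u x - u y| ^ p) * μk x y
  have hv : Measurable v := hu.sub_const c₀
  have hv' : weightedLpPow volume Ω (fun x => ω x ^ p) p v ≠ ⊤ :=
    weightedLpPow_sub_ne_top hΩ (by fun_prop) hωp₀ hu measurable_const hp.le huLp
      (weightedLpPow_const_ne_top hωLp p c₀)
  have hvω : IntegrableOn (fun x => v x * ω x ^ p) Ω volume := by
    simp only [v, sub_mul]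
    exact huω.sub (hωLp.const_mul c₀)
  have hvω₀ : ∫ x in Ω, v x * ω x ^ p = 0 :=
    integral_sub_div_integral_mul_eq_zero (ae_restrict_of_forall_mem hΩ hωp₀) hωLp huω
  have hW₀ : ∀ g : EuclideanSpace ℝ (Fin n) → ℝ,
      (IntegrableOn g Ω volume ∧ ∫ x in Ω, g x = 0 ∧
        {t | (Function.support g ∩ U t).Nonempty}.Finite) →
      Measurable g → weightedLpPow volume Ω (fun x => ω x ^ (-q)) q g ≠ ⊤ →
      ‖∫ x in Ω, v x * g x‖ₑ ≤ ENNReal.ofReal C₀ * ENNReal.ofReal C₁ * (∑' t, E t) ^ (1 / p) *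
        weightedLpPow volume Ω (fun x => ω x ^ (-q)) q g ^ (1 / q) := by
    rintro g ⟨hg_int, hg₀, hg_fin⟩ hg hg'
    obtain ⟨gt, hfin, hgt, hsum, hsupp, hmean, hbound⟩ := hdecomp g hg hg_int hg₀ hg_fin hg'
    exact enorm_setIntegral_mul_le_of_decomposition hΩ (fun t => (hUopen t).measurableSet) hUΩ
      hpq' hωmeas hωpos hωLp hv hv' (fun t => (hlocal t v hv).trans_eq (by simp [v, E])) hg'
      hfin hgt hsum hsupp hmean hbound
  calc weightedLpPow volume Ω (fun x => ω x ^ p) p v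
      ≤ (2 * (ENNReal.ofReal C₀ * ENNReal.ofReal C₁ * (∑' t, E t) ^ (1 / p))) ^ p := by
        refine weightedLpPow_le_of_dual_bound hΩ hpq' hωmeas hωpos hv hv' hvω hvω₀ hW₀ ?_
        intro f hf hf' ε hε
        obtain ⟨g, α, hg, hg_int, hg₀, hg_fin, hrest⟩ := hdense f hf hf' ε hε
        exact ⟨g, α, hg, ⟨hg_int, hg₀, hg_fin⟩, hrest⟩
    _ ≤ ENNReal.ofReal (2 * C₀ * C₁) ^ p * ∑' t, E t := by
        rw [← mul_assoc, ← mul_assoc, mul_rpow_of_nonneg _ _ (by positivity), ← rpow_mul,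
          one_div_mul_cancel hpq'.ne_zero, rpow_one, ← ofReal_ofNat 2]
        gcongr
        exact (mul_le_mul_left (ofReal_mul_ofReal_le 2 C₀) _).trans (ofReal_mul_ofReal_le _ _)

/-- Lemma 3.2 of the paper (abstract local-to-global argument): if the local Poincaré
inequality with kernel `μk` holds on each piece `U_t` with uniform constant `C₁`, if
mean-zero functions in `L^q(Ω, ω^{-q})` with "finite" support admit `C`-orthogonal
decompositions subordinate to `{U_t}` with constant `C₀`, and if such functions
together with `ω^p ·` constants are dense (with the norm-`2` projection bound), then
the global weighted Poincaré inequality holds with constant `2 C₀ C₁`. -/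
theorem local_to_global_poincare
    (n : ℕ) (hn : 1 ≤ n) (Ω : Set (EuclideanSpace ℝ (Fin n)))
    (hΩopen : IsOpen Ω) (hΩconn : IsConnected Ω) (hΩbdd : Bornology.IsBounded Ω)
    (p q : ℝ) (hp : 1 < p) (hq : 1 < q) (hpq : 1 / p + 1 / q = 1)
    (ω : EuclideanSpace ℝ (Fin n) → ℝ) (hωmeas : Measurable ω)
    (hωpos : ∀ x ∈ Ω, 0 < ω x)
    (hωLp : IntegrableOn (fun x => ω x ^ p) Ω volume)
    (Γ : Type*) [Countable Γ] (U : Γ → Set (EuclideanSpace ℝ (Fin n)))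
    (hUopen : ∀ t, IsOpen (U t)) (hUΩ : ∀ t, U t ⊆ Ω)
    (hcover : volume (Ω \ ⋃ t, U t) = 0)
    (N : ℕ) (hN : 1 ≤ N)
    (hoverlap : ∀ x, ∑' t, (U t).indicator (fun _ => (1 : ℝ≥0∞)) x ≤ N)
    (μk : EuclideanSpace ℝ (Fin n) → EuclideanSpace ℝ (Fin n) → ℝ≥0∞)
    (hμk : Measurable (Function.uncurry μk))
    (C₀ C₁ : ℝ) (hC₀ : 0 < C₀) (hC₁ : 0 < C₁)
    -- (i) the local inequality on each U_t with uniform constant C₁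
    (hlocal : ∀ t, ∀ v : EuclideanSpace ℝ (Fin n) → ℝ, Measurable v →
      ⨅ c : ℝ, ∫⁻ x in U t, ENNReal.ofReal (|v x - c| ^ p * ω x ^ p) ≤
        ENNReal.ofReal C₁ ^ p *
          ∫⁻ x in U t, ∫⁻ y in U t, ENNReal.ofReal (|v x - v y| ^ p) * μk x y)
    -- (ii) C-orthogonal decompositions with constant C₀
    (hdecomp : ∀ g : EuclideanSpace ℝ (Fin n) → ℝ, Measurable g →
      IntegrableOn g Ω volume → (∫ x in Ω, g x) = 0 →
      {t | (Function.support g ∩ U t).Nonempty}.Finite →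
      (∫⁻ x in Ω, ENNReal.ofReal (|g x| ^ q * ω x ^ (-q))) ≠ ⊤ →
      ∃ gt : Γ → EuclideanSpace ℝ (Fin n) → ℝ,
        {t | gt t ≠ 0}.Finite ∧ (∀ t, Measurable (gt t)) ∧
        (∀ x ∈ Ω, g x = ∑' t, gt t x) ∧
        (∀ t, Function.support (gt t) ⊆ U t) ∧
        (∀ t, (∫ x in U t, gt t x) = 0) ∧
        ∑' t, ∫⁻ x in U t, ENNReal.ofReal (|gt t x| ^ q * ω x ^ (-q)) ≤
          ENNReal.ofReal C₀ ^ q *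
            ∫⁻ x in Ω, ENNReal.ofReal (|g x| ^ q * ω x ^ (-q)))
    -- (iii) density of W₀ ⊕ ω^p·C in L^q(Ω, ω^{-q}), with the projection bound
    (hdense : ∀ f : EuclideanSpace ℝ (Fin n) → ℝ, Measurable f →
      (∫⁻ x in Ω, ENNReal.ofReal (|f x| ^ q * ω x ^ (-q))) ≠ ⊤ →
      ∀ ε : ℝ≥0∞, 0 < ε →
      ∃ (g : EuclideanSpace ℝ (Fin n) → ℝ) (α : ℝ), Measurable g ∧
        IntegrableOn g Ω volume ∧ (∫ x in Ω, g x) = 0 ∧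
        {t | (Function.support g ∩ U t).Nonempty}.Finite ∧
        (∫⁻ x in Ω, ENNReal.ofReal (|g x| ^ q * ω x ^ (-q))) ≠ ⊤ ∧
        (∫⁻ x in Ω, ENNReal.ofReal (|g x| ^ q * ω x ^ (-q))) ≤
          (2 : ℝ≥0∞) ^ q *
            ∫⁻ x in Ω, ENNReal.ofReal (|g x + α * ω x ^ p| ^ q * ω x ^ (-q)) ∧
        ∫⁻ x in Ω, ENNReal.ofReal (|f x - (g x + α * ω x ^ p)| ^ q * ω x ^ (-q)) < ε)
    -- the function u ∈ L^p(Ω, ω^p)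
    (u : EuclideanSpace ℝ (Fin n) → ℝ) (hu : Measurable u)
    (huLp : ∫⁻ x in Ω, ENNReal.ofReal (|u x| ^ p * ω x ^ p) ≠ ⊤)
    (huω : IntegrableOn (fun x => u x * ω x ^ p) Ω volume) :
    ∫⁻ x in Ω, ENNReal.ofReal
        (|u x - (∫ z in Ω, u z * ω z ^ p) / (∫ z in Ω, ω z ^ p)| ^ p * ω x ^ p) ≤
      ENNReal.ofReal (2 * C₀ * C₁) ^ p *
        ∑' t, ∫⁻ x in U t, ∫⁻ y in U t,
          ENNReal.ofReal (|u x - u y| ^ p) * μk x y :=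
  local_to_global_poincare_general n Ω hΩopen p q hp hpq ω hωmeas hωpos hωLp Γ U hUopen hUΩ μk C₀ C₁
    hlocal hdecomp hdense u hu huLp huω
end

section
/- Let Ω ⊆ R^n be a bounded domain with a tree covering {U_t}_{t∈Γ}: the U_t are open, cover Ω up to a null set, Σ_t χ_{U_t} ≤ N, Γ carries a rooted tree structure with root a, and there are pairwise disjoint open cubes B_t ⊆ U_t ∩ U_{t_p} for each non-root t (t_p denoting the parent). Then for every g ∈ L^1(Ω) with ∫_Ω g = 0 whose support intersects only finitely many U_t, there exist functions g_t ∈ L^1(Ω), all but finitely many zero, with g = Σ_t g_t, supp(g_t) ⊆ U_t, and ∫_{U_t} g_t = 0 for every t. -/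
/-!
Disjointify the cover to cut `g` into finitely many pieces `f_s`, each supported in `U_s`. The
mass `∫ f_s` is then carried from `s` down the path to the root: across each edge
`u → parent u` the multiple `(∫ f_s) φ_u` of a unit-mass function `φ_u`, supported in the cube
`B_u ⊆ U_u ∩ U_{parent u}`, is taken from the term of `u` and given to the term of
`parent u`. These moves telescope, so every term has mean zero except the root's, whose mean is
`∫ g = 0`.
-/

open MeasureTheory Metric Set ENNReal

noncomputable section

variable {X Γ : Type*}

def familySum : (Γ →₀ (X → ℝ)) →ₗ[ℝ] X → ℝ :=
  Finsupp.lsum ℝ fun _ => LinearMap.id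

theorem tsum_apply_eq_familySum (G : Γ →₀ (X → ℝ)) (x : X) :
    ∑' t, G t x = familySum G x := by
  rw [familySum, Finsupp.lsum_apply, Finsupp.sum, Finset.sum_apply]
  exact tsum_eq_sum fun t ht => by simp [Finsupp.notMem_support_iff.1 ht]

variable [MeasurableSpace X] {μ : Measure X}

def subordinateFamilies (μ : Measure X) (U : Γ → Set X) : Submodule ℝ (Γ →₀ (X → ℝ)) where
  carrier := {G | ∀ t, Integrable (G t) μ ∧ Function.support (G t) ⊆ U t}
  add_mem' {G H} hG hH t :=
    ⟨(hG t).1.add (hH t).1, (Function.support_add _ _).trans (union_subset (hG t).2 (hH t).2)⟩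
  zero_mem' t := ⟨integrable_zero _ _ _, by simp⟩
  smul_mem' c G hG t := ⟨(hG t).1.smul c, (Function.support_const_smul_subset c _).trans (hG t).2⟩

theorem integrable_finsuppSingle_apply {f : X → ℝ} (hf : Integrable f μ) (s t : Γ) :
    Integrable (Finsupp.single s f t) μ := by
  classical
  rw [Finsupp.single_apply]
  split_ifs
  exacts [hf, integrable_zero _ _ _]

theorem integral_finsuppSingle_apply (f : X → ℝ) (s t : Γ) :
    ∫ x, Finsupp.single s f t x ∂μ = Finsupp.single s (∫ x, f x ∂μ) t := by
  classical
  rw [Finsupp.single_apply, Finsupp.single_apply]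
  split_ifs <;> simp

theorem single_mem_subordinateFamilies {U : Γ → Set X} {s : Γ} {f : X → ℝ}
    (hf : Integrable f μ) (hfU : Function.support f ⊆ U s) :
    Finsupp.single s f ∈ subordinateFamilies μ U := by
  refine fun t => ⟨integrable_finsuppSingle_apply hf s t, ?_⟩
  rcases eq_or_ne s t with rfl | hst
  · simpa using hfU
  · simp [hst]

/-- In the theorem, `φ u` is the normalized indicator `χ_{B_u} / |B_u|`. -/
structure IsEdgeBumps (μ : Measure X) (U : Γ → Set X) (parent : Γ → Γ) (a : Γ)
    (φ : Γ → X → ℝ) : Prop where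
  integrable : ∀ u ≠ a, Integrable (φ u) μ
  integral_eq_one : ∀ u ≠ a, ∫ x, φ u x ∂μ = 1
  support_subset : ∀ u ≠ a, Function.support (φ u) ⊆ U u ∩ U (parent u)

def edgeTransfer (parent : Γ → Γ) (φ : Γ → X → ℝ) (u : Γ) : Γ →₀ (X → ℝ) :=
  Finsupp.single (parent u) (φ u) - Finsupp.single u (φ u)

def pathTransport (μ : Measure X) (parent : Γ → Γ) (φ : Γ → X → ℝ) (s : Γ) (k : ℕ)
    (f : X → ℝ) : Γ →₀ (X → ℝ) :=
  Finsupp.single s f + ∑ i ∈ Finset.range k, (∫ x, f x ∂μ) • edgeTransfer parent φ (parent^[i] s)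

variable {U : Γ → Set X} {parent : Γ → Γ} {a : Γ} {φ : Γ → X → ℝ}

theorem IsEdgeBumps.edgeTransfer_mem (hφ : IsEdgeBumps μ U parent a φ) {u : Γ} (hu : u ≠ a) :
    edgeTransfer parent φ u ∈ subordinateFamilies μ U :=
  sub_mem
    (single_mem_subordinateFamilies (hφ.integrable u hu) fun _ hx => (hφ.support_subset u hu hx).2)
    (single_mem_subordinateFamilies (hφ.integrable u hu) fun _ hx => (hφ.support_subset u hu hx).1)

theorem IsEdgeBumps.integral_edgeTransfer (hφ : IsEdgeBumps μ U parent a φ) {u : Γ}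
    (hu : u ≠ a) (t : Γ) :
    ∫ x, edgeTransfer parent φ u t x ∂μ =
      Finsupp.single (parent u) 1 t - Finsupp.single u 1 t := by
  have hint := integrable_finsuppSingle_apply (Γ := Γ) (hφ.integrable u hu)
  simp only [edgeTransfer, Finsupp.coe_sub, Pi.sub_apply]
  rw [integral_sub (hint _ t) (hint _ t), integral_finsuppSingle_apply,
    integral_finsuppSingle_apply, hφ.integral_eq_one u hu]

theorem IsEdgeBumps.pathTransport_mem (hφ : IsEdgeBumps μ U parent a φ) {s : Γ} {k : ℕ}
    (hpath : ∀ i < k, parent^[i] s ≠ a) {f : X → ℝ} (hf : Integrable f μ)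
    (hfU : Function.support f ⊆ U s) :
    pathTransport μ parent φ s k f ∈ subordinateFamilies μ U :=
  add_mem (single_mem_subordinateFamilies hf hfU) <| sum_mem fun i hi =>
    Submodule.smul_mem _ _ (hφ.edgeTransfer_mem (hpath i (Finset.mem_range.1 hi)))

theorem IsEdgeBumps.integral_pathTransport (hφ : IsEdgeBumps μ U parent a φ) {s : Γ} {k : ℕ}
    (hpath : ∀ i < k, parent^[i] s ≠ a) {f : X → ℝ} (hf : Integrable f μ) (t : Γ) :
    ∫ x, pathTransport μ parent φ s k f t x ∂μ =
      Finsupp.single (parent^[k] s) (∫ x, f x ∂μ) t := by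
  classical
  set c := ∫ x, f x ∂μ
  set p := fun i => parent^[i] s
  have hedge : ∀ i ∈ Finset.range k, Integrable (fun x => c * edgeTransfer parent φ (p i) t x) μ :=
    fun i hi => ((hφ.edgeTransfer_mem (hpath i (Finset.mem_range.1 hi)) t).1).const_mul c
  calc ∫ x, pathTransport μ parent φ s k f t x ∂μ
      = ∫ x, (Finsupp.single s f t x +
          ∑ i ∈ Finset.range k, c * edgeTransfer parent φ (p i) t x) ∂μ := by
        simp [pathTransport, c, p]
    _ = Finsupp.single s c t + ∑ i ∈ Finset.range k,
          (Finsupp.single (p (i + 1)) c t - Finsupp.single (p i) c t) := by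
        rw [integral_add (integrable_finsuppSingle_apply hf s t) (integrable_finsetSum _ hedge),
          integral_finsetSum _ hedge, integral_finsuppSingle_apply]
        congr 1
        refine Finset.sum_congr rfl fun i hi => ?_
        rw [integral_const_mul, hφ.integral_edgeTransfer (hpath i (Finset.mem_range.1 hi)),
          mul_sub]
        simp only [Finsupp.single_apply, mul_ite, mul_one, mul_zero, p,
          Function.iterate_succ_apply']
    _ = Finsupp.single (p k) c t := by
        rw [Finset.sum_range_sub (fun i => Finsupp.single (p i) c t)]
        simp [p]

theorem familySum_pathTransport (s : Γ) (k : ℕ) (f : X → ℝ) :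
    familySum (pathTransport μ parent φ s k f) = f := by
  simp [familySum, pathTransport, edgeTransfer, map_add, map_sum, map_smul, map_sub]

theorem IsEdgeBumps.exists_decomposition (hφ : IsEdgeBumps μ U parent a φ)
    (htree : ∀ t, ∃ k, parent^[k] t = a) (F : Finset Γ) {f : Γ → X → ℝ}
    (hf : ∀ s, Integrable (f s) μ) (hfU : ∀ s, Function.support (f s) ⊆ U s)
    (hmean : ∑ s ∈ F, ∫ x, f s x ∂μ = 0) :
    ∃ G ∈ subordinateFamilies μ U,
      (∀ x, ∑' t, G t x = ∑ s ∈ F, f s x) ∧ ∀ t, ∫ x, G t x ∂μ = 0 := by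
  classical
  -- `Nat.find` stops each path at its first visit to the root, so every edge it uses has a bump.
  have hpath : ∀ s, ∀ i < Nat.find (htree s), parent^[i] s ≠ a := fun s _ hi =>
    Nat.find_min (htree s) hi
  set G := ∑ s ∈ F, pathTransport μ parent φ s (Nat.find (htree s)) (f s)
  have hG : G ∈ subordinateFamilies μ U :=
    sum_mem fun s _ => hφ.pathTransport_mem (hpath s) (hf s) (hfU s)
  refine ⟨G, hG, fun x => ?_, fun t => ?_⟩
  · rw [tsum_apply_eq_familySum, map_sum]
    simp [familySum_pathTransport]
  · calc ∫ x, G t x ∂μ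
        = ∑ s ∈ F, ∫ x, pathTransport μ parent φ s (Nat.find (htree s)) (f s) t x ∂μ := by
          simp only [G, Finsupp.finsetSum_apply, Finset.sum_apply]
          exact integral_finsetSum _ fun s _ =>
            (hφ.pathTransport_mem (hpath s) (hf s) (hfU s) t).1
      _ = Finsupp.single a (∑ s ∈ F, ∫ x, f s x ∂μ) t := by
          simp only [hφ.integral_pathTransport (hpath _) (hf _), Nat.find_spec (htree _),
            Finsupp.single_apply]
          split_ifs <;> simp
      _ = 0 := by simp [hmean]

theorem exists_measurable_disjoint_refinement [Countable Γ] {U : Γ → Set X}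
    (hU : ∀ t, MeasurableSet (U t)) :
    ∃ V : Γ → Set X, (∀ t, MeasurableSet (V t)) ∧ (∀ t, V t ⊆ U t) ∧
      Pairwise (Function.onFun Disjoint V) ∧ ⋃ t, U t ⊆ ⋃ t, V t := by
  obtain ⟨e, he⟩ := exists_injective_nat Γ
  set W : ℕ → Set X := fun n => ⋃ (t) (_ : e t = n), U t
  have hWU : ∀ t, W (e t) ⊆ U t := fun t x hx => by
    obtain ⟨s, hs, hxs⟩ := mem_iUnion₂.1 hx
    exact he hs ▸ hxs
  refine ⟨fun t => disjointed W (e t),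
    fun t => MeasurableSet.disjointed (fun n => .iUnion fun t => .iUnion fun _ => hU t) _,
    fun t => (disjointed_subset W _).trans (hWU t),
    (disjoint_disjointed W).comp_of_injective he, fun x hx => ?_⟩
  obtain ⟨t, hxt⟩ := mem_iUnion.1 hx
  have hxW : x ∈ W (e t) := mem_iUnion₂.2 ⟨t, rfl, hxt⟩
  obtain ⟨n, hxn⟩ := mem_iUnion.1 <| (iUnion_disjointed (f := W)).symm ▸ mem_iUnion.2 ⟨e t, hxW⟩
  obtain ⟨s, rfl, -⟩ := mem_iUnion₂.1 (disjointed_subset W n hxn)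
  exact mem_iUnion.2 ⟨s, hxn⟩

theorem exists_finset_decomposition_of_cover [Countable Γ] {U : Γ → Set X} {Ω : Set X}
    (hU : ∀ t, MeasurableSet (U t)) (hUΩ : ∀ t, U t ⊆ Ω) (hcover : μ (Ω \ ⋃ t, U t) = 0)
    {g : X → ℝ} (hg : IntegrableOn g Ω μ) (hg0 : ∫ x in Ω, g x ∂μ = 0)
    (hfin : {t | (Function.support g ∩ U t).Nonempty}.Finite) :
    ∃ (F : Finset Γ) (f : Γ → X → ℝ), (∀ s, Integrable (f s) μ) ∧
      (∀ s, Function.support (f s) ⊆ U s) ∧ (∀ᵐ x ∂μ.restrict Ω, ∑ s ∈ F, f s x = g x) ∧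
      ∑ s ∈ F, ∫ x, f s x ∂μ = 0 := by
  classical
  obtain ⟨V, hVmeas, hVU, hVdisj, hUV⟩ := exists_measurable_disjoint_refinement hU
  set F := hfin.toFinset
  have hgF : ∀ t ∉ F, ∀ x ∈ U t, g x = 0 := fun t ht x hx => by
    by_contra hgx
    exact ht (hfin.mem_toFinset.2 ⟨x, hgx, hx⟩)
  have hsum : ∀ x ∈ ⋃ t, U t, ∑ s ∈ F, (V s).indicator g x = g x := fun x hx => by
    obtain ⟨t, hxt⟩ := mem_iUnion.1 (hUV hx)
    have hxs : ∀ s ≠ t, x ∉ V s := fun s hst => disjoint_right.1 (hVdisj hst) hxt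
    by_cases ht : t ∈ F
    · rw [Finset.sum_eq_single_of_mem t ht fun s _ hst => indicator_of_notMem (hxs s hst) g,
        indicator_of_mem hxt]
    · have hgx := hgF t ht x (hVU t hxt)
      exact hgx ▸ Finset.sum_eq_zero fun s _ => indicator_apply_eq_zero.2 fun _ => hgx
  have hsum_ae : ∀ᵐ x ∂μ.restrict Ω, ∑ s ∈ F, (V s).indicator g x = g x := by
    have hnull : μ.restrict Ω (⋃ t, U t)ᶜ = 0 := by
      rw [Measure.restrict_apply (MeasurableSet.iUnion hU).compl, inter_comm, ← sdiff_eq]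
      exact hcover
    exact measure_mono_null (fun x hx hxU => hx (hsum x hxU)) hnull
  have hint : ∀ s, Integrable ((V s).indicator g) μ := fun s =>
    (integrable_indicator_iff (hVmeas s)).2 (hg.mono_set ((hVU s).trans (hUΩ s)))
  refine ⟨F, fun s => (V s).indicator g, hint,
    fun s => (support_indicator_subset).trans (hVU s), hsum_ae, ?_⟩
  calc ∑ s ∈ F, ∫ x, (V s).indicator g x ∂μ
      = ∫ x, ∑ s ∈ F, (V s).indicator g x ∂μ := (integral_finsetSum F fun s _ => hint s).symm
    _ = ∫ x in Ω, ∑ s ∈ F, (V s).indicator g x ∂μ := by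
      refine (setIntegral_eq_integral_of_forall_compl_eq_zero fun x hx => ?_).symm
      exact Finset.sum_eq_zero fun s _ =>
        indicator_of_notMem (fun hxs => hx (hUΩ s (hVU s hxs))) g
    _ = 0 := by rw [integral_congr_ae hsum_ae, hg0]

theorem exists_integral_eq_one_support_subset {s : Set X} (hs : MeasurableSet s)
    (h0 : μ s ≠ 0) (hfin : μ s ≠ ∞) :
    ∃ φ : X → ℝ, Integrable φ μ ∧ ∫ x, φ x ∂μ = 1 ∧ Function.support φ ⊆ s := by
  refine ⟨s.indicator fun _ => (μ.real s)⁻¹,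
    (integrable_indicator_iff hs).2 (integrableOn_const hfin), ?_, support_indicator_subset⟩
  rw [integral_indicator_const _ hs, smul_eq_mul, mul_inv_cancel₀]
  exact (measureReal_ne_zero_iff hfin).2 h0

end

theorem isOpen_cube {ι : Type*} [Finite ι] (c : EuclideanSpace ℝ ι) (r : ℝ) :
    IsOpen {x : EuclideanSpace ℝ ι | ∀ i, |x i - c i| < r} := by
  rw [ofPred_forall]
  exact isOpen_iInter_of_finite fun i => isOpen_lt (by fun_prop) continuous_const

theorem volume_cube_ne_zero {ι : Type*} [Fintype ι] (c : EuclideanSpace ℝ ι) {r : ℝ} (hr : 0 < r) :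
    volume {x : EuclideanSpace ℝ ι | ∀ i, |x i - c i| < r} ≠ 0 :=
  (isOpen_cube c r).measure_ne_zero volume ⟨c, fun i => by simpa using hr⟩

theorem tree_covering_decomposition_general
    (n : ℕ) (Ω : Set (EuclideanSpace ℝ (Fin n)))
    (hΩbdd : Bornology.IsBounded Ω)
    (Γ : Type*) [Countable Γ] (U : Γ → Set (EuclideanSpace ℝ (Fin n)))
    (hUopen : ∀ t, IsOpen (U t)) (hUΩ : ∀ t, U t ⊆ Ω)
    (hcover : volume (Ω \ ⋃ t, U t) = 0)
    (a : Γ) (parent : Γ → Γ)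
    (htree : ∀ t, ∃ k : ℕ, parent^[k] t = a)
    (B : Γ → Set (EuclideanSpace ℝ (Fin n)))
    (hBcube : ∀ t, t ≠ a → ∃ (c : EuclideanSpace ℝ (Fin n)) (L : ℝ), 0 < L ∧
      B t = {x | ∀ i, |x i - c i| < L / 2})
    (hBsub : ∀ t, t ≠ a → B t ⊆ U t ∩ U (parent t)) :
    ∀ g : EuclideanSpace ℝ (Fin n) → ℝ,
      IntegrableOn g Ω volume → (∫ x in Ω, g x) = 0 →
      {t | (Function.support g ∩ U t).Nonempty}.Finite →
      ∃ gt : Γ → EuclideanSpace ℝ (Fin n) → ℝ,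
        {t | gt t ≠ 0}.Finite ∧
        (∀ t, IntegrableOn (gt t) Ω volume) ∧
        (∀ᵐ x ∂(volume.restrict Ω), g x = ∑' t, gt t x) ∧
        (∀ t, Function.support (gt t) ⊆ U t) ∧
        (∀ t, (∫ x in U t, gt t x) = 0) := by
  intro g hg hg0 hgfin
  obtain ⟨F, f, hf, hfU, hfg, hfmean⟩ := exists_finset_decomposition_of_cover
    (fun t => (hUopen t).measurableSet) hUΩ hcover hg hg0 hgfin
  have hbump : ∀ u ≠ a, ∃ φ : EuclideanSpace ℝ (Fin n) → ℝ,
      Integrable φ volume ∧ ∫ x, φ x = 1 ∧ Function.support φ ⊆ B u := fun u hu => by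
    have hBfin : volume (B u) ≠ ∞ :=
      (hΩbdd.subset ((hBsub u hu).trans (inter_subset_left.trans (hUΩ u)))).measure_lt_top.ne
    obtain ⟨c, L, hL, hB⟩ := hBcube u hu
    rw [hB] at hBfin ⊢
    exact exists_integral_eq_one_support_subset (isOpen_cube c _).measurableSet
      (volume_cube_ne_zero c (half_pos hL)) hBfin
  choose! φ hφint hφone hφsupp using hbump
  have hφ : IsEdgeBumps volume U parent a φ :=
    ⟨hφint, hφone, fun u hu => (hφsupp u hu).trans (hBsub u hu)⟩
  obtain ⟨G, hG, hGsum, hGint⟩ := hφ.exists_decomposition htree F hf hfU hfmean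
  refine ⟨G, G.hasFiniteSupport, fun t => (hG t).1.integrableOn, ?_, fun t => (hG t).2,
    fun t => ?_⟩
  · filter_upwards [hfg] with x hx
    rw [hGsum, hx]
  · rw [setIntegral_eq_integral_of_forall_compl_eq_zero fun x hx =>
      Function.notMem_support.1 fun h => hx ((hG t).2 h)]
    exact hGint t

/-- Existence part of Theorem 2.5 of the paper: given a tree covering `{U_t}` of `Ω`
(with root `a`, parent map `parent`, and pairwise disjoint open cubes
`B_t ⊆ U_t ∩ U_{t_p}`), every mean-zero `g ∈ L¹(Ω)` whose support meets only finitely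
many `U_t` admits a finite `C`-orthogonal decomposition `g = Σ_t g_t` with
`supp g_t ⊆ U_t` and `∫_{U_t} g_t = 0`. -/
theorem tree_covering_decomposition
    (n : ℕ) (hn : 1 ≤ n) (Ω : Set (EuclideanSpace ℝ (Fin n)))
    (hΩopen : IsOpen Ω) (hΩconn : IsConnected Ω) (hΩbdd : Bornology.IsBounded Ω)
    (Γ : Type*) [Countable Γ] (U : Γ → Set (EuclideanSpace ℝ (Fin n)))
    (hUopen : ∀ t, IsOpen (U t)) (hUΩ : ∀ t, U t ⊆ Ω)
    (hcover : volume (Ω \ ⋃ t, U t) = 0)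
    (N : ℕ) (hN : 1 ≤ N)
    (hoverlap : ∀ x, ∑' t, (U t).indicator (fun _ => (1 : ℝ≥0∞)) x ≤ N)
    (hfinint : ∀ t, {s | (U t ∩ U s).Nonempty}.Finite)
    (a : Γ) (parent : Γ → Γ) (hroot : parent a = a)
    (htree : ∀ t, ∃ k : ℕ, parent^[k] t = a)
    (B : Γ → Set (EuclideanSpace ℝ (Fin n)))
    (hBcube : ∀ t, t ≠ a → ∃ (c : EuclideanSpace ℝ (Fin n)) (L : ℝ), 0 < L ∧
      B t = {x | ∀ i, |x i - c i| < L / 2})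
    (hBsub : ∀ t, t ≠ a → B t ⊆ U t ∩ U (parent t))
    (hBdisj : Pairwise (Function.onFun Disjoint B)) :
    ∀ g : EuclideanSpace ℝ (Fin n) → ℝ,
      IntegrableOn g Ω volume → (∫ x in Ω, g x) = 0 →
      {t | (Function.support g ∩ U t).Nonempty}.Finite →
      ∃ gt : Γ → EuclideanSpace ℝ (Fin n) → ℝ,
        {t | gt t ≠ 0}.Finite ∧
        (∀ t, IntegrableOn (gt t) Ω volume) ∧
        (∀ᵐ x ∂(volume.restrict Ω), g x = ∑' t, gt t x) ∧
        (∀ t, Function.support (gt t) ⊆ U t) ∧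
        (∀ t, (∫ x in U t, gt t x) = 0) :=
  tree_covering_decomposition_general n Ω hΩbdd Γ U hUopen hUΩ hcover a parent htree B hBcube hBsub
end

section
/- Let Ω ⊆ R^n be bounded open, ω : Ω → (0,∞) with ω^p ∈ L^1(Ω), 1 < p,q < ∞ conjugate. For g ∈ L^q(Ω, ω^{-q}) with ∫_Ω g = 0 and α ∈ R, one has ‖g‖_{L^q(Ω,ω^{-q})} ≤ 2 ‖g + α ω^p‖_{L^q(Ω,ω^{-q})}. -/
/-!
Write `‖f‖` for `‖f / ω‖_{L^q}`. Since `g` has mean zero, `∫ (g + α ω^p) = α ∫ ω^p`, and Hölder's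
inequality against `ω ∈ L^p` gives `|α| ∫ ω^p ≤ ‖g + α ω^p‖ (∫ ω^p)^{1/p}`. As
`‖α ω^p‖ = |α| (∫ ω^p)^{1/q}` (because `(p - 1) q = p`), this says `‖α ω^p‖ ≤ ‖g + α ω^p‖`, and
the triangle inequality gives `‖g‖ ≤ ‖g + α ω^p‖ + ‖α ω^p‖ ≤ 2 ‖g + α ω^p‖`.
-/

open MeasureTheory ENNReal

section Weighted

variable {X : Type*} [MeasurableSpace X] {μ : Measure X} {ω : X → ℝ}

lemma lintegral_ofReal_rpow_mul_rpow_neg_eq_eLpNorm_div {q : ℝ} (hq : 0 < q)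
    (hω : ∀ᵐ x ∂μ, 0 ≤ ω x) (f : X → ℝ) :
    (∫⁻ x, ENNReal.ofReal (|f x| ^ q * ω x ^ (-q)) ∂μ) ^ (1 / q) =
      eLpNorm (fun x => f x / ω x) (ENNReal.ofReal q) μ := by
  rw [eLpNorm_eq_lintegral_rpow_enorm_toReal (by simpa using hq) ofReal_ne_top,
    toReal_ofReal hq.le]
  congr 1
  refine lintegral_congr_ae (hω.mono fun x hx => ?_)
  dsimp only
  rw [Real.enorm_eq_ofReal_abs, ofReal_rpow_of_nonneg (abs_nonneg _) hq.le, abs_div,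
    abs_of_nonneg hx, Real.div_rpow (abs_nonneg _) hx, Real.rpow_neg hx, div_eq_mul_inv]

lemma eLpNorm_rpow_eq_lintegral {r s : ℝ} (hs : 0 < s) (hω : ∀ᵐ x ∂μ, 0 ≤ ω x) :
    eLpNorm (fun x => ω x ^ r) (ENNReal.ofReal s) μ =
      (∫⁻ x, ENNReal.ofReal (ω x ^ (r * s)) ∂μ) ^ (1 / s) := by
  rw [eLpNorm_eq_lintegral_rpow_enorm_toReal (by simpa using hs) ofReal_ne_top,
    toReal_ofReal hs.le]
  congr 1
  refine lintegral_congr_ae (hω.mono fun x hx => ?_)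
  dsimp only
  rw [Real.enorm_eq_ofReal_abs, abs_of_nonneg (Real.rpow_nonneg hx r),
    ofReal_rpow_of_nonneg (Real.rpow_nonneg hx r) hs.le, Real.rpow_mul hx]

lemma eLpNorm_const_mul_rpow_div_self {p q : ℝ} (hpq : p.HolderConjugate q)
    (hω : ∀ᵐ x ∂μ, 0 < ω x) (α : ℝ) :
    eLpNorm (fun x => α * ω x ^ p / ω x) (ENNReal.ofReal q) μ =
      ‖α‖ₑ * (∫⁻ x, ENNReal.ofReal (ω x ^ p) ∂μ) ^ (1 / q) := by
  have hdiv : (fun x => α * ω x ^ p / ω x) =ᵐ[μ] α • fun x => ω x ^ (p - 1) :=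
    hω.mono fun x hx => by simp [mul_div_assoc, Real.rpow_sub_one hx.ne']
  rw [eLpNorm_congr_ae hdiv, eLpNorm_const_smul,
    eLpNorm_rpow_eq_lintegral hpq.symm.pos (hω.mono fun x hx => hx.le), hpq.sub_one_mul_conj]

lemma enorm_integral_le_eLpNorm_mul_eLpNorm_div {p q : ℝ} (hpq : p.HolderConjugate q)
    (hω : ∀ᵐ x ∂μ, ω x ≠ 0) (hωm : AEStronglyMeasurable ω μ) {f : X → ℝ}
    (hf : AEStronglyMeasurable (fun x => f x / ω x) μ) :
    ‖∫ x, f x ∂μ‖ₑ ≤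
      eLpNorm ω (ENNReal.ofReal p) μ * eLpNorm (fun x => f x / ω x) (ENNReal.ofReal q) μ := by
  have := hpq.ennrealOfReal
  calc ‖∫ x, f x ∂μ‖ₑ ≤ eLpNorm f 1 μ := by
        rw [eLpNorm_one_eq_lintegral_enorm]; exact enorm_integral_le_lintegral_enorm f
    _ = eLpNorm (ω • fun x => f x / ω x) 1 μ :=
        eLpNorm_congr_ae (hω.mono fun x hx => by simp [mul_div_cancel₀ _ hx])
    _ ≤ _ := eLpNorm_smul_le_mul_eLpNorm hf hωm

lemma eLpNorm_const_mul_rpow_div_le {p q : ℝ} (hpq : p.HolderConjugate q)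
    (hω : ∀ᵐ x ∂μ, 0 < ω x) (hωm : AEStronglyMeasurable ω μ)
    (hωp : Integrable (fun x => ω x ^ p) μ) {g : X → ℝ} (hg : Integrable g μ)
    (hg0 : ∫ x, g x ∂μ = 0) (α : ℝ) :
    eLpNorm (fun x => α * ω x ^ p / ω x) (ENNReal.ofReal q) μ ≤
      eLpNorm (fun x => (g x + α * ω x ^ p) / ω x) (ENNReal.ofReal q) μ := by
  rw [eLpNorm_const_mul_rpow_div_self hpq hω]
  set N := eLpNorm (fun x => (g x + α * ω x ^ p) / ω x) (ENNReal.ofReal q) μ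
  set I := ∫⁻ x, ENNReal.ofReal (ω x ^ p) ∂μ
  have hωp0 : ∀ᵐ x ∂μ, 0 ≤ ω x ^ p := hω.mono fun x hx => Real.rpow_nonneg hx.le p
  have hI : ENNReal.ofReal (∫ x, ω x ^ p ∂μ) = I := ofReal_integral_eq_lintegral_ofReal hωp hωp0
  have hItop : I ≠ ⊤ := hI ▸ ofReal_ne_top
  have hωnorm : eLpNorm ω (ENNReal.ofReal p) μ = I ^ (1 / p) := by
    simpa using eLpNorm_rpow_eq_lintegral (r := 1) hpq.pos (hω.mono fun x hx => hx.le)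
  have hmean : ∫ x, (g x + α * ω x ^ p) ∂μ = α * ∫ x, ω x ^ p ∂μ := by
    rw [integral_add hg (hωp.const_mul α), integral_const_mul, hg0, zero_add]
  have hholder : ‖α‖ₑ * I ≤ I ^ (1 / p) * N :=
    calc ‖α‖ₑ * I = ‖∫ x, (g x + α * ω x ^ p) ∂μ‖ₑ := by
          rw [hmean, enorm_mul, Real.enorm_eq_ofReal (integral_nonneg_of_ae hωp0), hI]
      _ ≤ I ^ (1 / p) * N := hωnorm ▸ enorm_integral_le_eLpNorm_mul_eLpNorm_div hpq
          (hω.mono fun x hx => hx.ne') hωm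
          ((hg.add (hωp.const_mul α)).aestronglyMeasurable.div₀ hωm)
  rcases eq_or_ne I 0 with hI0 | hI0
  · rw [hI0, zero_rpow_of_pos hpq.symm.one_div_pos, mul_zero]
    exact zero_le
  refine (ENNReal.mul_le_mul_iff_right (a := I ^ (1 / p))
    (rpow_pos (pos_iff_ne_zero.2 hI0) hItop).ne'
    (rpow_ne_top_of_nonneg hpq.one_div_nonneg hItop)).mp ?_
  calc I ^ (1 / p) * (‖α‖ₑ * I ^ (1 / q)) = ‖α‖ₑ * I := by
        rw [mul_left_comm, ← rpow_add _ _ hI0 hItop, hpq.one_div_add_one_div, div_one, rpow_one]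
    _ ≤ I ^ (1 / p) * N := hholder

theorem eLpNorm_div_le_two_mul_of_integral_eq_zero {p q : ℝ} (hpq : p.HolderConjugate q)
    (hω : ∀ᵐ x ∂μ, 0 < ω x) (hωm : AEStronglyMeasurable ω μ)
    (hωp : Integrable (fun x => ω x ^ p) μ) {g : X → ℝ} (hg : Integrable g μ)
    (hg0 : ∫ x, g x ∂μ = 0) (α : ℝ) :
    eLpNorm (fun x => g x / ω x) (ENNReal.ofReal q) μ ≤
      2 * eLpNorm (fun x => (g x + α * ω x ^ p) / ω x) (ENNReal.ofReal q) μ := by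
  have hsum : AEStronglyMeasurable (fun x => (g x + α * ω x ^ p) / ω x) μ :=
    (hg.add (hωp.const_mul α)).aestronglyMeasurable.div₀ hωm
  have hconst : AEStronglyMeasurable (fun x => α * ω x ^ p / ω x) μ :=
    (hωp.const_mul α).aestronglyMeasurable.div₀ hωm
  calc eLpNorm (fun x => g x / ω x) (ENNReal.ofReal q) μ
      = eLpNorm ((fun x => (g x + α * ω x ^ p) / ω x) - fun x => α * ω x ^ p / ω x)
          (ENNReal.ofReal q) μ := by
        congr 1; ext x; simp only [Pi.sub_apply]; ring
    _ ≤ eLpNorm (fun x => (g x + α * ω x ^ p) / ω x) (ENNReal.ofReal q) μ +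
          eLpNorm (fun x => α * ω x ^ p / ω x) (ENNReal.ofReal q) μ :=
        eLpNorm_sub_le hsum hconst (ENNReal.one_le_ofReal.2 hpq.symm.lt.le)
    _ ≤ 2 * eLpNorm (fun x => (g x + α * ω x ^ p) / ω x) (ENNReal.ofReal q) μ := by
        rw [two_mul]
        gcongr
        exact eLpNorm_const_mul_rpow_div_le hpq hω hωm hωp hg hg0 α

end Weighted

theorem mean_zero_projection_bound_general
    (n : ℕ) (Ω : Set (EuclideanSpace ℝ (Fin n)))
    (hΩopen : IsOpen Ω)
    (p q : ℝ) (hp : 1 < p) (hpq : 1 / p + 1 / q = 1)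
    (ω : EuclideanSpace ℝ (Fin n) → ℝ) (hωmeas : Measurable ω)
    (hωpos : ∀ x ∈ Ω, 0 < ω x)
    (hωLp : IntegrableOn (fun x => ω x ^ p) Ω volume)
    (g : EuclideanSpace ℝ (Fin n) → ℝ)
    (hgint : IntegrableOn g Ω volume) (hgmean : (∫ x in Ω, g x) = 0)
    (α : ℝ) :
    (∫⁻ x in Ω, ENNReal.ofReal (|g x| ^ q * ω x ^ (-q))) ^ (1 / q) ≤
      2 * (∫⁻ x in Ω,
        ENNReal.ofReal (|g x + α * ω x ^ p| ^ q * ω x ^ (-q))) ^ (1 / q) := by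
  have hpq' : p.HolderConjugate q :=
    Real.holderConjugate_iff.2 ⟨hp, by simpa only [one_div] using hpq⟩
  have hω : ∀ᵐ x ∂volume.restrict Ω, 0 < ω x :=
    (ae_restrict_mem hΩopen.measurableSet).mono hωpos
  have hω0 : ∀ᵐ x ∂volume.restrict Ω, 0 ≤ ω x := hω.mono fun x hx => hx.le
  rw [lintegral_ofReal_rpow_mul_rpow_neg_eq_eLpNorm_div hpq'.symm.pos hω0,
    lintegral_ofReal_rpow_mul_rpow_neg_eq_eLpNorm_div hpq'.symm.pos hω0]
  exact eLpNorm_div_le_two_mul_of_integral_eq_zero hpq' hω hωmeas.aestronglyMeasurable hωLp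
    hgint hgmean α

/-- Quantitative part of Lemma 3.1 of the paper: for mean-zero `g ∈ L^q(Ω, ω^{-q})`
and any constant `α`, one has `‖g‖_{L^q(Ω,ω^{-q})} ≤ 2 ‖g + α ω^p‖_{L^q(Ω,ω^{-q})}`. -/
theorem mean_zero_projection_bound
    (n : ℕ) (hn : 1 ≤ n) (Ω : Set (EuclideanSpace ℝ (Fin n)))
    (hΩopen : IsOpen Ω) (hΩbdd : Bornology.IsBounded Ω)
    (p q : ℝ) (hp : 1 < p) (hq : 1 < q) (hpq : 1 / p + 1 / q = 1)
    (ω : EuclideanSpace ℝ (Fin n) → ℝ) (hωmeas : Measurable ω)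
    (hωpos : ∀ x ∈ Ω, 0 < ω x)
    (hωLp : IntegrableOn (fun x => ω x ^ p) Ω volume)
    (g : EuclideanSpace ℝ (Fin n) → ℝ) (hg : Measurable g)
    (hgint : IntegrableOn g Ω volume) (hgmean : (∫ x in Ω, g x) = 0)
    (hgLq : ∫⁻ x in Ω, ENNReal.ofReal (|g x| ^ q * ω x ^ (-q)) ≠ ⊤)
    (α : ℝ) :
    (∫⁻ x in Ω, ENNReal.ofReal (|g x| ^ q * ω x ^ (-q))) ^ (1 / q) ≤
      2 * (∫⁻ x in Ω,
        ENNReal.ofReal (|g x + α * ω x ^ p| ^ q * ω x ^ (-q))) ^ (1 / q) :=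
  mean_zero_projection_bound_general n Ω hΩopen p q hp hpq ω hωmeas hωpos hωLp g hgint hgmean α
end
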